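/- arXiv:1006.2022 — 4 statements merged into one kernel-verified Lean document; each statement's English description precedes it below -/
import Mathlib

section
/- The rate region of the one-way cooperating MAC is convex: the set of rate pairs (R1,R2) ∈ ℝ≥0² for which there exist a finite set 𝒰 and a joint pmf of the form P(s)p(u,x1|s)p(x2|u)P(y|x1,x2,s) satisfying C12 ≥ I(U;S), R1 ≤ I(X1;Y|X2,S,U) + C12 − I(U;S), R2 ≤ I(X2;Y|X1,S,U), and R1+R2 ≤ min{ I(X1,X2;Y|S,U) + C12 − I(U;S), I(X1,X2;Y|S) } is a convex subset of ℝ². -/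
open scoped BigOperators Classical
open Finset

namespace Paper

variable {Ω : Type} [Fintype Ω]

/-- `pr μ X a` is the probability that the random variable `X` takes the value `a`
under the pmf `μ` on the finite sample space `Ω`. -/
noncomputable def pr {A : Type} (μ : Ω → ℝ) (X : Ω → A) (a : A) : ℝ :=
  ∑ ω, if X ω = a then μ ω else 0

/-- `μ` is a probability mass function on the finite space `Ω`. -/
def IsPMF (μ : Ω → ℝ) : Prop := (∀ ω, 0 ≤ μ ω) ∧ ∑ ω, μ ω = 1

/-- Shannon entropy (in bits) of the random variable `X` under `μ`. -/
noncomputable def ent {A : Type} [Fintype A] (μ : Ω → ℝ) (X : Ω → A) : ℝ :=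
  -∑ a, pr μ X a * Real.logb 2 (pr μ X a)

/-- Mutual information `I(X;Y)` (in bits) under `μ`. -/
noncomputable def mi {A B : Type} [Fintype A] [Fintype B] (μ : Ω → ℝ)
    (X : Ω → A) (Y : Ω → B) : ℝ :=
  ent μ X + ent μ Y - ent μ (fun ω => (X ω, Y ω))

/-- Conditional mutual information `I(X;Y|Z)` (in bits) under `μ`. -/
noncomputable def cmi {A B C : Type} [Fintype A] [Fintype B] [Fintype C] (μ : Ω → ℝ)
    (X : Ω → A) (Y : Ω → B) (Z : Ω → C) : ℝ :=
  ent μ (fun ω => (X ω, Z ω)) + ent μ (fun ω => (Y ω, Z ω))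
    - ent μ (fun ω => (X ω, Y ω, Z ω)) - ent μ Z

/-- `X` and `Y` are conditionally independent given `Z` under `μ`:
`P(X = a, Y = b | Z = c) = P(X = a | Z = c) · P(Y = b | Z = c)`
whenever `P(Z = c) ≠ 0`. -/
def CondIndep {A B C : Type} (μ : Ω → ℝ) (X : Ω → A) (Y : Ω → B) (Z : Ω → C) : Prop :=
  ∀ a b c, pr μ Z c ≠ 0 →
    pr μ (fun ω => (X ω, Y ω, Z ω)) (a, b, c) * pr μ Z c
      = pr μ (fun ω => (X ω, Z ω)) (a, c) * pr μ (fun ω => (Y ω, Z ω)) (b, c)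



variable {𝒳₁ 𝒳₂ 𝒮 𝒴 : Type} [Fintype 𝒳₁] [Fintype 𝒳₂] [Fintype 𝒮] [Fintype 𝒴]

/-- The joint pmf `P(s)·p(u,x₁|s)·p(x₂|u)·P(y|x₁,x₂,s)` on `𝒮 × 𝒰 × 𝒳₁ × 𝒳₂ × 𝒴`. -/
noncomputable def jointPMF {𝒰 : Type} (PS : 𝒮 → ℝ) (W : 𝒳₁ → 𝒳₂ → 𝒮 → 𝒴 → ℝ)
    (pUX1 : 𝒮 → 𝒰 × 𝒳₁ → ℝ) (pX2 : 𝒰 → 𝒳₂ → ℝ) : 𝒮 × 𝒰 × 𝒳₁ × 𝒳₂ × 𝒴 → ℝ :=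
  fun q => PS q.1 * pUX1 q.1 (q.2.1, q.2.2.1) * pX2 q.2.1 q.2.2.2.1
      * W q.2.2.1 q.2.2.2.1 q.1 q.2.2.2.2

/-- The single-letter constraints of the one-way-cooperation capacity region, for a
given auxiliary alphabet `𝒰` and conditional pmfs `p(u,x₁|s)`, `p(x₂|u)`:
`C₁₂ ≥ I(U;S)`, `R₁ ≤ I(X₁;Y|X₂,S,U) + C₁₂ − I(U;S)`, `R₂ ≤ I(X₂;Y|X₁,S,U)`,
`R₁+R₂ ≤ min{I(X₁,X₂;Y|S,U) + C₁₂ − I(U;S), I(X₁,X₂;Y|S)}`. -/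
def RegionConds {𝒰 : Type} [Fintype 𝒰] (PS : 𝒮 → ℝ) (W : 𝒳₁ → 𝒳₂ → 𝒮 → 𝒴 → ℝ)
    (C12 R1 R2 : ℝ) (pUX1 : 𝒮 → 𝒰 × 𝒳₁ → ℝ) (pX2 : 𝒰 → 𝒳₂ → ℝ) : Prop :=
  (∀ s q, 0 ≤ pUX1 s q) ∧ (∀ s, ∑ q : 𝒰 × 𝒳₁, pUX1 s q = 1) ∧
  (∀ u x, 0 ≤ pX2 u x) ∧ (∀ u, ∑ x, pX2 u x = 1) ∧
  C12 ≥ mi (jointPMF PS W pUX1 pX2) (fun q => q.2.1) (fun q => q.1) ∧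
  R1 ≤ cmi (jointPMF PS W pUX1 pX2) (fun q => q.2.2.1) (fun q => q.2.2.2.2)
        (fun q => (q.2.2.2.1, q.1, q.2.1))
      + C12 - mi (jointPMF PS W pUX1 pX2) (fun q => q.2.1) (fun q => q.1) ∧
  R2 ≤ cmi (jointPMF PS W pUX1 pX2) (fun q => q.2.2.2.1) (fun q => q.2.2.2.2)
        (fun q => (q.2.2.1, q.1, q.2.1)) ∧
  R1 + R2 ≤ min
      (cmi (jointPMF PS W pUX1 pX2) (fun q => (q.2.2.1, q.2.2.2.1)) (fun q => q.2.2.2.2)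
          (fun q => (q.1, q.2.1))
        + C12 - mi (jointPMF PS W pUX1 pX2) (fun q => q.2.1) (fun q => q.1))
      (cmi (jointPMF PS W pUX1 pX2) (fun q => (q.2.2.1, q.2.2.2.1)) (fun q => q.2.2.2.2)
          (fun q => q.1))

/-- Membership in the single-letter rate region of Theorem 1: there exist a finite
auxiliary alphabet `𝒰` and a joint pmf of the form `P(s)p(u,x₁|s)p(x₂|u)P(y|x₁,x₂,s)`
satisfying the constraints. -/
def InRegion (PS : 𝒮 → ℝ) (W : 𝒳₁ → 𝒳₂ → 𝒮 → 𝒴 → ℝ) (C12 R1 R2 : ℝ) : Prop :=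
  0 ≤ R1 ∧ 0 ≤ R2 ∧
  ∃ (𝒰 : Type) (_ : Fintype 𝒰) (pUX1 : 𝒮 → 𝒰 × 𝒳₁ → ℝ) (pX2 : 𝒰 → 𝒳₂ → ℝ),
    RegionConds PS W C12 R1 R2 pUX1 pX2

end Paper

/-! Time sharing. Given admissible auxiliaries `U₁` and `U₂`, let `U` range over `U₁ ⊕ U₂`, using
the first code with probability `a` and the second with probability `b`. Because `U` reveals which
code is in use, the entropy of any tuple containing `U` is the `(a, b)`-average of the two entropies
plus the binary entropy of `(a, b)`; that constant cancels in `I(U;S)`, `I(X₁;Y|X₂SU)`,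
`I(X₂;Y|X₁SU)` and `I(X₁X₂;Y|SU)`, which are therefore affine under time sharing. The last bound
`I(X₁X₂;Y|S) = H(Y,S) - H(S) - H(Y|X₁X₂S)` is concave: `H(S)` is fixed by `P(s)`, `H(Y|X₁X₂S)` is
linear in the law of `(X₁,X₂,S)` since the channel is fixed, and `H(Y,S)` is concave. -/

namespace Paper

open Real

section Entropy

variable {Ω A B : Type} [Fintype Ω] {μ : Ω → ℝ}

lemma pr_nonneg (hμ : ∀ ω, 0 ≤ μ ω) (X : Ω → A) (x : A) : 0 ≤ pr μ X x :=
  Finset.sum_nonneg fun ω _ => by split_ifs <;> simp [hμ ω]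

lemma sum_pr [Fintype A] (μ : Ω → ℝ) (X : Ω → A) : ∑ x, pr μ X x = ∑ ω, μ ω := by
  unfold pr
  rw [Finset.sum_comm]
  simp

lemma ent_eq_sum_negMulLog [Fintype A] (μ : Ω → ℝ) (X : Ω → A) :
    ent μ X = (∑ x, negMulLog (pr μ X x)) / log 2 := by
  simp only [ent, negMulLog, logb, Finset.sum_div, ← Finset.sum_neg_distrib]
  congr 1 with x
  ring

lemma ent_eq_neg_sum_logb_pr [Fintype A] (μ : Ω → ℝ) (X : Ω → A) :
    ent μ X = -∑ ω, μ ω * logb 2 (pr μ X (X ω)) := by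
  unfold ent
  conv_lhs => enter [1, 2, x]; rw [pr, Finset.sum_mul]
  rw [Finset.sum_comm]
  simp [ite_mul, pr]

lemma ent_congr [Fintype A] [Fintype B] {X : Ω → A} {Y : Ω → B}
    (h : ∀ ω ω', X ω = X ω' ↔ Y ω = Y ω') : ent μ X = ent μ Y := by
  have hpr : ∀ ω, pr μ X (X ω) = pr μ Y (Y ω) := fun ω => by
    simp only [pr, h]
  simp only [ent_eq_neg_sum_logb_pr, hpr]

lemma ent_triple_of_kernel [Fintype A] [Fintype B] [Fintype C] {X : Ω → A} {Y : Ω → B}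
    {Z : Ω → C} (K : A × C → B → ℝ) (hK : ∀ xz, ∑ y, K xz y = 1)
    (hXYZ : ∀ x y z, pr μ (fun ω => (X ω, Y ω, Z ω)) (x, y, z)
      = pr μ (fun ω => (X ω, Z ω)) (x, z) * K (x, z) y) :
    ent μ (fun ω => (X ω, Y ω, Z ω)) = ent μ (fun ω => (X ω, Z ω))
      + (∑ xz, pr μ (fun ω => (X ω, Z ω)) xz * ∑ y, negMulLog (K xz y)) / log 2 := by
  simp only [ent_eq_sum_negMulLog, ← add_div, Fintype.sum_prod_type, hXYZ, negMulLog_mul,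
    ← Finset.sum_add_distrib]
  congr 1
  refine Finset.sum_congr rfl fun x _ => ?_
  rw [Finset.sum_comm]
  refine Finset.sum_congr rfl fun z _ => ?_
  rw [Finset.sum_add_distrib, ← Finset.sum_mul, hK, one_mul, ← Finset.mul_sum]

lemma cmi_eq_of_kernel [Fintype A] [Fintype B] [Fintype C] {X : Ω → A} {Y : Ω → B}
    {Z : Ω → C} (K : A × C → B → ℝ) (hK : ∀ xz, ∑ y, K xz y = 1)
    (hXYZ : ∀ x y z, pr μ (fun ω => (X ω, Y ω, Z ω)) (x, y, z)
      = pr μ (fun ω => (X ω, Z ω)) (x, z) * K (x, z) y) :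
    cmi μ X Y Z = ent μ (fun ω => (Y ω, Z ω)) - ent μ Z
      - (∑ xz, pr μ (fun ω => (X ω, Z ω)) xz * ∑ y, negMulLog (K xz y)) / log 2 := by
  rw [cmi, ent_triple_of_kernel K hK hXYZ]
  ring

end Entropy

section Mixture

variable {Ω Ω₁ Ω₂ A A₁ A₂ B B₁ B₂ C C₁ C₂ : Type} [Fintype Ω] [Fintype Ω₁] [Fintype Ω₂]

def IsMixture (μ : Ω → ℝ) (a : ℝ) (μ₁ : Ω₁ → ℝ) (e₁ : Ω₁ → Ω) (b : ℝ) (μ₂ : Ω₂ → ℝ)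
    (e₂ : Ω₂ → Ω) : Prop :=
  ∀ f : Ω → ℝ, ∑ ω, μ ω * f ω = a * ∑ ω, μ₁ ω * f (e₁ ω) + b * ∑ ω, μ₂ ω * f (e₂ ω)

namespace IsMixture

variable {μ : Ω → ℝ} {μ₁ : Ω₁ → ℝ} {μ₂ : Ω₂ → ℝ} {e₁ : Ω₁ → Ω} {e₂ : Ω₂ → Ω} {a b : ℝ}

lemma pr_eq (h : IsMixture μ a μ₁ e₁ b μ₂ e₂) (X : Ω → A) (x : A) :
    pr μ X x = a * pr μ₁ (fun ω => X (e₁ ω)) x + b * pr μ₂ (fun ω => X (e₂ ω)) x := by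
  simpa [pr, mul_boole] using h fun ω => if X ω = x then 1 else 0

lemma ent_eq_of_disjoint [Fintype A] [Fintype A₁] [Fintype A₂]
    (h : IsMixture μ a μ₁ e₁ b μ₂ e₂) (h₁ : ∑ ω, μ₁ ω = 1) (h₂ : ∑ ω, μ₂ ω = 1)
    {X : Ω → A} {X₁ : Ω₁ → A₁} {X₂ : Ω₂ → A₂} (hX : ∀ ω₁ ω₂, X (e₁ ω₁) ≠ X (e₂ ω₂))
    (hX₁ : ∀ ω ω', X (e₁ ω) = X (e₁ ω') ↔ X₁ ω = X₁ ω')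
    (hX₂ : ∀ ω ω', X (e₂ ω) = X (e₂ ω') ↔ X₂ ω = X₂ ω') :
    ent μ X = a * ent μ₁ X₁ + b * ent μ₂ X₂ + (negMulLog a + negMulLog b) / log 2 := by
  rw [← ent_congr hX₁, ← ent_congr hX₂]
  have hsupp : ∀ x, pr μ₁ (fun ω => X (e₁ ω)) x = 0 ∨ pr μ₂ (fun ω => X (e₂ ω)) x = 0 := by
    intro x
    by_contra! hx
    obtain ⟨ω₁, -, hω₁⟩ := Finset.exists_ne_zero_of_sum_ne_zero hx.1
    obtain ⟨ω₂, -, hω₂⟩ := Finset.exists_ne_zero_of_sum_ne_zero hx.2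
    exact hX ω₁ ω₂ ((ite_ne_right_iff.1 hω₁).1.trans (ite_ne_right_iff.1 hω₂).1.symm)
  have hterm : ∀ x, negMulLog (pr μ X x)
      = a * negMulLog (pr μ₁ (fun ω => X (e₁ ω)) x) + b * negMulLog (pr μ₂ (fun ω => X (e₂ ω)) x)
        + (pr μ₁ (fun ω => X (e₁ ω)) x * negMulLog a
          + pr μ₂ (fun ω => X (e₂ ω)) x * negMulLog b) := by
    intro x
    rw [h.pr_eq]
    rcases hsupp x with h0 | h0 <;>
      simp only [h0, mul_zero, zero_add, add_zero, negMulLog_zero, negMulLog_mul] <;> ring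
  simp only [ent_eq_sum_negMulLog, hterm, Finset.sum_add_distrib, ← Finset.mul_sum,
    ← Finset.sum_mul, sum_pr, h₁, h₂]
  ring

lemma ent_eq_of_pr_eq [Fintype A] (h : IsMixture μ a μ₁ e₁ b μ₂ e₂) (hab : a + b = 1)
    {X : Ω → A} (hX : pr μ₁ (fun ω => X (e₁ ω)) = pr μ₂ (fun ω => X (e₂ ω))) :
    ent μ X = a * ent μ₁ (fun ω => X (e₁ ω)) + b * ent μ₂ (fun ω => X (e₂ ω)) := by
  have hpr : pr μ X = pr μ₂ (fun ω => X (e₂ ω)) :=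
    funext fun x => by rw [h.pr_eq, hX, ← add_mul, hab, one_mul]
  simp only [ent, hpr, hX]
  rw [← add_mul, hab, one_mul]

lemma le_ent [Fintype A] (h : IsMixture μ a μ₁ e₁ b μ₂ e₂) (ha : 0 ≤ a) (hb : 0 ≤ b)
    (hab : a + b = 1) (h₁ : ∀ ω, 0 ≤ μ₁ ω) (h₂ : ∀ ω, 0 ≤ μ₂ ω) (X : Ω → A) :
    a * ent μ₁ (fun ω => X (e₁ ω)) + b * ent μ₂ (fun ω => X (e₂ ω)) ≤ ent μ X := by
  simp only [ent_eq_sum_negMulLog, mul_div_assoc', ← add_div, h.pr_eq]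
  gcongr
  rw [Finset.mul_sum, Finset.mul_sum, ← Finset.sum_add_distrib]
  refine Finset.sum_le_sum fun x _ => ?_
  simpa only [smul_eq_mul] using concaveOn_negMulLog.2 (pr_nonneg h₁ _ x) (pr_nonneg h₂ _ x)
    ha hb hab

lemma cmi_eq [Fintype A] [Fintype A₁] [Fintype A₂] [Fintype B] [Fintype B₁] [Fintype B₂]
    [Fintype C] [Fintype C₁] [Fintype C₂]
    (h : IsMixture μ a μ₁ e₁ b μ₂ e₂) (h₁ : ∑ ω, μ₁ ω = 1) (h₂ : ∑ ω, μ₂ ω = 1)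
    {X : Ω → A} {Y : Ω → B} {Z : Ω → C} {X₁ : Ω₁ → A₁} {Y₁ : Ω₁ → B₁} {Z₁ : Ω₁ → C₁}
    {X₂ : Ω₂ → A₂} {Y₂ : Ω₂ → B₂} {Z₂ : Ω₂ → C₂} (hZ : ∀ ω₁ ω₂, Z (e₁ ω₁) ≠ Z (e₂ ω₂))
    (hX₁ : ∀ ω ω', X (e₁ ω) = X (e₁ ω') ↔ X₁ ω = X₁ ω')
    (hY₁ : ∀ ω ω', Y (e₁ ω) = Y (e₁ ω') ↔ Y₁ ω = Y₁ ω')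
    (hZ₁ : ∀ ω ω', Z (e₁ ω) = Z (e₁ ω') ↔ Z₁ ω = Z₁ ω')
    (hX₂ : ∀ ω ω', X (e₂ ω) = X (e₂ ω') ↔ X₂ ω = X₂ ω')
    (hY₂ : ∀ ω ω', Y (e₂ ω) = Y (e₂ ω') ↔ Y₂ ω = Y₂ ω')
    (hZ₂ : ∀ ω ω', Z (e₂ ω) = Z (e₂ ω') ↔ Z₂ ω = Z₂ ω') :
    cmi μ X Y Z = a * cmi μ₁ X₁ Y₁ Z₁ + b * cmi μ₂ X₂ Y₂ Z₂ := by
  simp only [cmi]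
  rw [h.ent_eq_of_disjoint h₁ h₂ (X₁ := fun ω => (X₁ ω, Z₁ ω)) (X₂ := fun ω => (X₂ ω, Z₂ ω))
      (by simp [hZ]) (by simp [hX₁, hZ₁]) (by simp [hX₂, hZ₂]),
    h.ent_eq_of_disjoint h₁ h₂ (X₁ := fun ω => (Y₁ ω, Z₁ ω)) (X₂ := fun ω => (Y₂ ω, Z₂ ω))
      (by simp [hZ]) (by simp [hY₁, hZ₁]) (by simp [hY₂, hZ₂]),
    h.ent_eq_of_disjoint h₁ h₂ (X₁ := fun ω => (X₁ ω, Y₁ ω, Z₁ ω))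
      (X₂ := fun ω => (X₂ ω, Y₂ ω, Z₂ ω))
      (by simp [hZ]) (by simp [hX₁, hY₁, hZ₁]) (by simp [hX₂, hY₂, hZ₂]),
    h.ent_eq_of_disjoint h₁ h₂ hZ hZ₁ hZ₂]
  ring

lemma mi_eq [Fintype A] [Fintype A₁] [Fintype A₂] [Fintype B] [Fintype B₁] [Fintype B₂]
    (h : IsMixture μ a μ₁ e₁ b μ₂ e₂) (h₁ : ∑ ω, μ₁ ω = 1) (h₂ : ∑ ω, μ₂ ω = 1)
    (hab : a + b = 1) {X : Ω → A} {Y : Ω → B} {X₁ : Ω₁ → A₁} {Y₁ : Ω₁ → B₁}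
    {X₂ : Ω₂ → A₂} {Y₂ : Ω₂ → B₂} (hX : ∀ ω₁ ω₂, X (e₁ ω₁) ≠ X (e₂ ω₂))
    (hX₁ : ∀ ω ω', X (e₁ ω) = X (e₁ ω') ↔ X₁ ω = X₁ ω')
    (hY₁ : ∀ ω ω', Y (e₁ ω) = Y (e₁ ω') ↔ Y₁ ω = Y₁ ω')
    (hX₂ : ∀ ω ω', X (e₂ ω) = X (e₂ ω') ↔ X₂ ω = X₂ ω')
    (hY₂ : ∀ ω ω', Y (e₂ ω) = Y (e₂ ω') ↔ Y₂ ω = Y₂ ω')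
    (hY : pr μ₁ (fun ω => Y (e₁ ω)) = pr μ₂ (fun ω => Y (e₂ ω))) :
    mi μ X Y = a * mi μ₁ X₁ Y₁ + b * mi μ₂ X₂ Y₂ := by
  simp only [mi]
  rw [h.ent_eq_of_disjoint h₁ h₂ hX hX₁ hX₂, h.ent_eq_of_pr_eq hab hY, ent_congr hY₁,
    ent_congr hY₂,
    h.ent_eq_of_disjoint h₁ h₂ (X₁ := fun ω => (X₁ ω, Y₁ ω)) (X₂ := fun ω => (X₂ ω, Y₂ ω))
      (by simp [hX]) (by simp [hX₁, hY₁]) (by simp [hX₂, hY₂])]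
  ring

lemma le_cmi_of_kernel [Fintype A] [Fintype B] [Fintype C]
    (h : IsMixture μ a μ₁ e₁ b μ₂ e₂) (ha : 0 ≤ a) (hb : 0 ≤ b) (hab : a + b = 1)
    (h₁ : ∀ ω, 0 ≤ μ₁ ω) (h₂ : ∀ ω, 0 ≤ μ₂ ω) {X : Ω → A} {Y : Ω → B} {Z : Ω → C}
    (K : A × C → B → ℝ) (hK : ∀ xz, ∑ y, K xz y = 1)
    (hXYZ₁ : ∀ x y z, pr μ₁ (fun ω => (X (e₁ ω), Y (e₁ ω), Z (e₁ ω))) (x, y, z)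
      = pr μ₁ (fun ω => (X (e₁ ω), Z (e₁ ω))) (x, z) * K (x, z) y)
    (hXYZ₂ : ∀ x y z, pr μ₂ (fun ω => (X (e₂ ω), Y (e₂ ω), Z (e₂ ω))) (x, y, z)
      = pr μ₂ (fun ω => (X (e₂ ω), Z (e₂ ω))) (x, z) * K (x, z) y)
    (hZ : pr μ₁ (fun ω => Z (e₁ ω)) = pr μ₂ (fun ω => Z (e₂ ω))) :
    a * cmi μ₁ (fun ω => X (e₁ ω)) (fun ω => Y (e₁ ω)) (fun ω => Z (e₁ ω))
      + b * cmi μ₂ (fun ω => X (e₂ ω)) (fun ω => Y (e₂ ω)) (fun ω => Z (e₂ ω))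
      ≤ cmi μ X Y Z := by
  have hXYZ : ∀ x y z, pr μ (fun ω => (X ω, Y ω, Z ω)) (x, y, z)
      = pr μ (fun ω => (X ω, Z ω)) (x, z) * K (x, z) y := fun x y z => by
    rw [h.pr_eq, h.pr_eq, hXYZ₁, hXYZ₂]
    ring
  have hkernel : (∑ xz, pr μ (fun ω => (X ω, Z ω)) xz * ∑ y, negMulLog (K xz y)) / log 2
      = a * ((∑ xz, pr μ₁ (fun ω => (X (e₁ ω), Z (e₁ ω))) xz * ∑ y, negMulLog (K xz y)) / log 2)
        + b * ((∑ xz, pr μ₂ (fun ω => (X (e₂ ω), Z (e₂ ω))) xz * ∑ y, negMulLog (K xz y))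
          / log 2) := by
    rw [mul_div_assoc', mul_div_assoc', ← add_div, Finset.mul_sum, Finset.mul_sum,
      ← Finset.sum_add_distrib]
    congr 1
    refine Finset.sum_congr rfl fun xz _ => ?_
    rw [h.pr_eq]
    ring
  rw [cmi_eq_of_kernel K hK hXYZ, cmi_eq_of_kernel K hK hXYZ₁, cmi_eq_of_kernel K hK hXYZ₂,
    h.ent_eq_of_pr_eq hab hZ, hkernel]
  linarith [h.le_ent ha hb hab h₁ h₂ fun ω => (Y ω, Z ω)]

end IsMixture

end Mixture

section JointPMF

variable {𝒳₁ 𝒳₂ 𝒮 𝒴 𝒰 : Type} [Fintype 𝒳₁] [Fintype 𝒳₂] [Fintype 𝒮] [Fintype 𝒴] [Fintype 𝒰]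
  {PS : 𝒮 → ℝ} {W : 𝒳₁ → 𝒳₂ → 𝒮 → 𝒴 → ℝ} {pUX1 : 𝒮 → 𝒰 × 𝒳₁ → ℝ} {pX2 : 𝒰 → 𝒳₂ → ℝ}

lemma pr_jointPMF_state (hW : ∀ x1 x2 s, IsPMF (W x1 x2 s)) (hpUX1 : ∀ s, IsPMF (pUX1 s))
    (hpX2 : ∀ u, IsPMF (pX2 u)) (s : 𝒮) :
    pr (jointPMF PS W pUX1 pX2) (fun q => q.1) s = PS s := by
  have hpUX1' : ∀ s, ∑ u, ∑ x, pUX1 s (u, x) = 1 := fun s => by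
    rw [← Fintype.sum_prod_type']
    exact (hpUX1 s).2
  simp [pr, jointPMF, Fintype.sum_prod_type, ← Finset.mul_sum, (hW _ _ _).2, (hpX2 _).2,
    hpUX1']

lemma isPMF_jointPMF (hPS : IsPMF PS) (hW : ∀ x1 x2 s, IsPMF (W x1 x2 s))
    (hpUX1 : ∀ s, IsPMF (pUX1 s)) (hpX2 : ∀ u, IsPMF (pX2 u)) :
    IsPMF (jointPMF PS W pUX1 pX2) := by
  refine ⟨fun ω => ?_, ?_⟩
  · exact mul_nonneg (mul_nonneg (mul_nonneg (hPS.1 _) ((hpUX1 _).1 _)) ((hpX2 _).1 _))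
      ((hW _ _ _).1 _)
  · rw [← sum_pr _ fun q => q.1]
    simp [pr_jointPMF_state hW hpUX1 hpX2, hPS.2]

lemma pr_jointPMF_channel (hW : ∀ x1 x2 s, IsPMF (W x1 x2 s)) (x1 : 𝒳₁) (x2 : 𝒳₂) (y : 𝒴)
    (s : 𝒮) :
    pr (jointPMF PS W pUX1 pX2) (fun q => ((q.2.2.1, q.2.2.2.1), q.2.2.2.2, q.1)) ((x1, x2), y, s)
      = pr (jointPMF PS W pUX1 pX2) (fun q => ((q.2.2.1, q.2.2.2.1), q.1)) ((x1, x2), s)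
        * W x1 x2 s y := by
  simp [pr, jointPMF, Fintype.sum_prod_type, ite_and, ← Finset.mul_sum, (hW _ _ _).2,
    Finset.sum_mul]

end JointPMF

section TimeSharing

variable {𝒳₁ 𝒳₂ 𝒮 𝒴 𝒰₁ 𝒰₂ : Type} [Fintype 𝒳₁] [Fintype 𝒰₁] [Fintype 𝒰₂] {PS : 𝒮 → ℝ}
  {W : 𝒳₁ → 𝒳₂ → 𝒮 → 𝒴 → ℝ} {a b : ℝ}
  {p₁ : 𝒮 → 𝒰₁ × 𝒳₁ → ℝ} {px₁ : 𝒰₁ → 𝒳₂ → ℝ} {p₂ : 𝒮 → 𝒰₂ × 𝒳₁ → ℝ} {px₂ : 𝒰₂ → 𝒳₂ → ℝ}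

def timeShare (a b : ℝ) (p₁ : 𝒮 → 𝒰₁ × 𝒳₁ → ℝ) (p₂ : 𝒮 → 𝒰₂ × 𝒳₁ → ℝ) :
    𝒮 → (𝒰₁ ⊕ 𝒰₂) × 𝒳₁ → ℝ
  | s, (.inl u, x) => a * p₁ s (u, x)
  | s, (.inr u, x) => b * p₂ s (u, x)

lemma isPMF_timeShare (ha : 0 ≤ a) (hb : 0 ≤ b) (hab : a + b = 1)
    (hp₁ : ∀ s, IsPMF (p₁ s)) (hp₂ : ∀ s, IsPMF (p₂ s)) (s : 𝒮) :
    IsPMF (timeShare a b p₁ p₂ s) := by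
  refine ⟨?_, ?_⟩
  · rintro ⟨u | u, x⟩
    · exact mul_nonneg ha ((hp₁ s).1 _)
    · exact mul_nonneg hb ((hp₂ s).1 _)
  · have h₁ := (hp₁ s).2
    have h₂ := (hp₂ s).2
    rw [Fintype.sum_prod_type] at h₁ h₂
    simp only [Fintype.sum_prod_type, Fintype.sum_sum_type, timeShare, ← Finset.mul_sum, h₁, h₂,
      mul_one, hab]

variable [Fintype 𝒳₂] [Fintype 𝒮] [Fintype 𝒴]

lemma isMixture_jointPMF_timeShare :
    IsMixture (jointPMF PS W (timeShare a b p₁ p₂) (Sum.elim px₁ px₂))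
      a (jointPMF PS W p₁ px₁) (fun ω => (ω.1, .inl ω.2.1, ω.2.2))
      b (jointPMF PS W p₂ px₂) (fun ω => (ω.1, .inr ω.2.1, ω.2.2)) := by
  intro f
  simp only [Fintype.sum_prod_type, Fintype.sum_sum_type, Finset.mul_sum,
    ← Finset.sum_add_distrib]
  refine Finset.sum_congr rfl fun s _ => ?_
  congr 1 <;> simp only [jointPMF, timeShare, Sum.elim_inl, Sum.elim_inr, mul_assoc, mul_left_comm]

lemma mi_U_S_timeShare (hab : a + b = 1) (hpmf₁ : IsPMF (jointPMF PS W p₁ px₁))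
    (hpmf₂ : IsPMF (jointPMF PS W p₂ px₂))
    (hS : pr (jointPMF PS W p₁ px₁) (fun q => q.1) = pr (jointPMF PS W p₂ px₂) (fun q => q.1)) :
    mi (jointPMF PS W (timeShare a b p₁ p₂) (Sum.elim px₁ px₂)) (fun q => q.2.1) (fun q => q.1)
      = a * mi (jointPMF PS W p₁ px₁) (fun q => q.2.1) (fun q => q.1)
        + b * mi (jointPMF PS W p₂ px₂) (fun q => q.2.1) (fun q => q.1) :=
  isMixture_jointPMF_timeShare.mi_eq hpmf₁.2 hpmf₂.2 hab (by simp) (by simp)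
    (fun _ _ => Iff.rfl) (by simp) (fun _ _ => Iff.rfl) hS

lemma cmi_X1_Y_timeShare (hpmf₁ : IsPMF (jointPMF PS W p₁ px₁))
    (hpmf₂ : IsPMF (jointPMF PS W p₂ px₂)) :
    cmi (jointPMF PS W (timeShare a b p₁ p₂) (Sum.elim px₁ px₂)) (fun q => q.2.2.1)
        (fun q => q.2.2.2.2) (fun q => (q.2.2.2.1, q.1, q.2.1))
      = a * cmi (jointPMF PS W p₁ px₁) (fun q => q.2.2.1) (fun q => q.2.2.2.2)
          (fun q => (q.2.2.2.1, q.1, q.2.1))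
        + b * cmi (jointPMF PS W p₂ px₂) (fun q => q.2.2.1) (fun q => q.2.2.2.2)
          (fun q => (q.2.2.2.1, q.1, q.2.1)) :=
  isMixture_jointPMF_timeShare.cmi_eq hpmf₁.2 hpmf₂.2 (by simp) (fun _ _ => Iff.rfl)
    (fun _ _ => Iff.rfl) (by simp) (fun _ _ => Iff.rfl) (fun _ _ => Iff.rfl) (by simp)

lemma cmi_X2_Y_timeShare (hpmf₁ : IsPMF (jointPMF PS W p₁ px₁))
    (hpmf₂ : IsPMF (jointPMF PS W p₂ px₂)) :
    cmi (jointPMF PS W (timeShare a b p₁ p₂) (Sum.elim px₁ px₂)) (fun q => q.2.2.2.1)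
        (fun q => q.2.2.2.2) (fun q => (q.2.2.1, q.1, q.2.1))
      = a * cmi (jointPMF PS W p₁ px₁) (fun q => q.2.2.2.1) (fun q => q.2.2.2.2)
          (fun q => (q.2.2.1, q.1, q.2.1))
        + b * cmi (jointPMF PS W p₂ px₂) (fun q => q.2.2.2.1) (fun q => q.2.2.2.2)
          (fun q => (q.2.2.1, q.1, q.2.1)) :=
  isMixture_jointPMF_timeShare.cmi_eq hpmf₁.2 hpmf₂.2 (by simp) (fun _ _ => Iff.rfl)
    (fun _ _ => Iff.rfl) (by simp) (fun _ _ => Iff.rfl) (fun _ _ => Iff.rfl) (by simp)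

lemma cmi_X1X2_Y_SU_timeShare (hpmf₁ : IsPMF (jointPMF PS W p₁ px₁))
    (hpmf₂ : IsPMF (jointPMF PS W p₂ px₂)) :
    cmi (jointPMF PS W (timeShare a b p₁ p₂) (Sum.elim px₁ px₂)) (fun q => (q.2.2.1, q.2.2.2.1))
        (fun q => q.2.2.2.2) (fun q => (q.1, q.2.1))
      = a * cmi (jointPMF PS W p₁ px₁) (fun q => (q.2.2.1, q.2.2.2.1)) (fun q => q.2.2.2.2)
          (fun q => (q.1, q.2.1))
        + b * cmi (jointPMF PS W p₂ px₂) (fun q => (q.2.2.1, q.2.2.2.1)) (fun q => q.2.2.2.2)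
          (fun q => (q.1, q.2.1)) :=
  isMixture_jointPMF_timeShare.cmi_eq hpmf₁.2 hpmf₂.2 (by simp) (fun _ _ => Iff.rfl)
    (fun _ _ => Iff.rfl) (by simp) (fun _ _ => Iff.rfl) (fun _ _ => Iff.rfl) (by simp)

lemma le_cmi_X1X2_Y_S_timeShare (hW : ∀ x1 x2 s, IsPMF (W x1 x2 s)) (ha : 0 ≤ a) (hb : 0 ≤ b)
    (hab : a + b = 1) (hpmf₁ : IsPMF (jointPMF PS W p₁ px₁))
    (hpmf₂ : IsPMF (jointPMF PS W p₂ px₂))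
    (hS : pr (jointPMF PS W p₁ px₁) (fun q => q.1) = pr (jointPMF PS W p₂ px₂) (fun q => q.1)) :
    a * cmi (jointPMF PS W p₁ px₁) (fun q => (q.2.2.1, q.2.2.2.1)) (fun q => q.2.2.2.2)
          (fun q => q.1)
        + b * cmi (jointPMF PS W p₂ px₂) (fun q => (q.2.2.1, q.2.2.2.1)) (fun q => q.2.2.2.2)
          (fun q => q.1)
      ≤ cmi (jointPMF PS W (timeShare a b p₁ p₂) (Sum.elim px₁ px₂))
          (fun q => (q.2.2.1, q.2.2.2.1)) (fun q => q.2.2.2.2) (fun q => q.1) :=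
  isMixture_jointPMF_timeShare.le_cmi_of_kernel (X := fun q => (q.2.2.1, q.2.2.2.1))
    (Y := fun q => q.2.2.2.2) (Z := fun q => q.1) ha hb hab hpmf₁.1 hpmf₂.1
    (fun xs y => W xs.1.1 xs.1.2 xs.2 y) (fun _ => (hW _ _ _).2)
    (fun x y s => pr_jointPMF_channel hW x.1 x.2 y s)
    (fun x y s => pr_jointPMF_channel hW x.1 x.2 y s) hS

theorem regionConds_timeShare (hPS : IsPMF PS) (hW : ∀ x1 x2 s, IsPMF (W x1 x2 s))
    {C12 R1 R2 R1' R2' : ℝ} (ha : 0 ≤ a) (hb : 0 ≤ b) (hab : a + b = 1)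
    (h₁ : RegionConds PS W C12 R1 R2 p₁ px₁) (h₂ : RegionConds PS W C12 R1' R2' p₂ px₂) :
    RegionConds PS W C12 (a * R1 + b * R1') (a * R2 + b * R2') (timeShare a b p₁ p₂)
      (Sum.elim px₁ px₂) := by
  obtain ⟨hp₁, hs₁, hpx₁, hsx₁, hC₁, hR1₁, hR2₁, hsum₁⟩ := h₁
  obtain ⟨hp₂, hs₂, hpx₂, hsx₂, hC₂, hR1₂, hR2₂, hsum₂⟩ := h₂
  have hk₁ : ∀ s, IsPMF (p₁ s) := fun s => ⟨hp₁ s, hs₁ s⟩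
  have hk₂ : ∀ s, IsPMF (p₂ s) := fun s => ⟨hp₂ s, hs₂ s⟩
  have hkx₁ : ∀ u, IsPMF (px₁ u) := fun u => ⟨hpx₁ u, hsx₁ u⟩
  have hkx₂ : ∀ u, IsPMF (px₂ u) := fun u => ⟨hpx₂ u, hsx₂ u⟩
  have hpmf₁ := isPMF_jointPMF hPS hW hk₁ hkx₁
  have hpmf₂ := isPMF_jointPMF hPS hW hk₂ hkx₂
  have hS : pr (jointPMF PS W p₁ px₁) (fun q => q.1) = pr (jointPMF PS W p₂ px₂) (fun q => q.1) :=
    funext fun s => by rw [pr_jointPMF_state hW hk₁ hkx₁, pr_jointPMF_state hW hk₂ hkx₂]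
  have hI_US := mi_U_S_timeShare hab hpmf₁ hpmf₂ hS
  have hI₁ := cmi_X1_Y_timeShare (a := a) (b := b) hpmf₁ hpmf₂
  have hI₂ := cmi_X2_Y_timeShare (a := a) (b := b) hpmf₁ hpmf₂
  have hI₁₂ := cmi_X1X2_Y_SU_timeShare (a := a) (b := b) hpmf₁ hpmf₂
  have hI₁₂_S := le_cmi_X1X2_Y_S_timeShare hW ha hb hab hpmf₁ hpmf₂ hS
  have hC : C12 = a * C12 + b * C12 := by rw [← add_mul, hab, one_mul]
  have hts := isPMF_timeShare ha hb hab hk₁ hk₂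
  refine ⟨fun s => (hts s).1, fun s => (hts s).2, by rintro (u | u) <;> simp [hpx₁, hpx₂],
    by rintro (u | u) <;> simp [hsx₁, hsx₂], ?_, ?_, ?_, le_min ?_ ?_⟩
  · linarith [mul_le_mul_of_nonneg_left hC₁ ha, mul_le_mul_of_nonneg_left hC₂ hb]
  · linarith [mul_le_mul_of_nonneg_left hR1₁ ha, mul_le_mul_of_nonneg_left hR1₂ hb]
  · linarith [mul_le_mul_of_nonneg_left hR2₁ ha, mul_le_mul_of_nonneg_left hR2₂ hb]
  · linarith [mul_le_mul_of_nonneg_left (le_min_iff.1 hsum₁).1 ha,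
      mul_le_mul_of_nonneg_left (le_min_iff.1 hsum₂).1 hb]
  · linarith [mul_le_mul_of_nonneg_left (le_min_iff.1 hsum₁).2 ha,
      mul_le_mul_of_nonneg_left (le_min_iff.1 hsum₂).2 hb]

end TimeSharing

theorem region_one_way_cooperation_convex_general
    {𝒳₁ 𝒳₂ 𝒮 𝒴 : Type} [Fintype 𝒳₁] [Fintype 𝒳₂] [Fintype 𝒮] [Fintype 𝒴]
    (PS : 𝒮 → ℝ) (hPS : IsPMF PS)
    (W : 𝒳₁ → 𝒳₂ → 𝒮 → 𝒴 → ℝ)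
    (hW : ∀ x1 x2 s, IsPMF (W x1 x2 s))
    (C12 : ℝ) :
    Convex ℝ {p : ℝ × ℝ | 0 ≤ p.1 ∧ 0 ≤ p.2 ∧
      ∃ (𝒰 : Type) (_ : Fintype 𝒰) (pUX1 : 𝒮 → 𝒰 × 𝒳₁ → ℝ) (pX2 : 𝒰 → 𝒳₂ → ℝ),
        RegionConds PS W C12 p.1 p.2 pUX1 pX2} := by
  rintro ⟨R1, R2⟩ ⟨hR1, hR2, 𝒰₁, _, p₁, px₁, h₁⟩ ⟨R1', R2'⟩ ⟨hR1', hR2', 𝒰₂, _, p₂, px₂, h₂⟩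
    a b ha hb hab
  simp only [Prod.smul_mk, Prod.mk_add_mk, smul_eq_mul]
  exact ⟨by positivity, by positivity, 𝒰₁ ⊕ 𝒰₂, inferInstance, timeShare a b p₁ p₂,
    Sum.elim px₁ px₂, regionConds_timeShare hPS hW ha hb hab h₁ h₂⟩

/-- **Lemma 1, part 1**: for fixed finite alphabets, state pmf `PS`, channel `W`, and
cooperation capacity `C₁₂ ≥ 0`, the rate region of the one-way cooperating MAC — the set
of pairs `(R₁,R₂) ∈ ℝ≥0²` for which there exist a finite auxiliary alphabet `𝒰` and a
joint pmf of the form `P(s)p(u,x₁|s)p(x₂|u)P(y|x₁,x₂,s)` satisfying the single-letter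
constraints — is a convex subset of `ℝ²`. -/
theorem region_one_way_cooperation_convex
    {𝒳₁ 𝒳₂ 𝒮 𝒴 : Type} [Fintype 𝒳₁] [Fintype 𝒳₂] [Fintype 𝒮] [Fintype 𝒴]
    (PS : 𝒮 → ℝ) (hPS : IsPMF PS)
    (W : 𝒳₁ → 𝒳₂ → 𝒮 → 𝒴 → ℝ)
    (hW : ∀ x1 x2 s, IsPMF (W x1 x2 s))
    (C12 : ℝ) (hC12 : 0 ≤ C12) :
    Convex ℝ {p : ℝ × ℝ | 0 ≤ p.1 ∧ 0 ≤ p.2 ∧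
      ∃ (𝒰 : Type) (_ : Fintype 𝒰) (pUX1 : 𝒮 → 𝒰 × 𝒳₁ → ℝ) (pX2 : 𝒰 → 𝒳₂ → ℝ),
        RegionConds PS W C12 p.1 p.2 pUX1 pX2} :=
  region_one_way_cooperation_convex_general PS hPS W hW C12

end Paper
end

section
/- (Joint typicality lemma) For every joint pmf P_{X,Y,Z} on finite sets 𝒳×𝒴×𝒵 there exists a function δ(ε) with δ(ε) → 0 as ε → 0 such that for all n, all ε > 0, and all pairs of sequences (x^n,y^n) ∈ T_ε^{(n)}(X,Y): if Z̃^n = (Z̃_1,…,Z̃_n) has independent components with Z̃_i ∼ P_{Z|X}(·|x_i), then Pr{(x^n,y^n,Z̃^n) ∈ T_ε^{(n)}(X,Y,Z)} ≤ 2^{−n(I(Y;Z|X) − δ(ε))}. -/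
open scoped BigOperators Classical
open Finset

namespace Paper

variable {Ω : Type} [Fintype Ω]

/-- Empirical frequency of the symbol `a` in the `n`-sequence `f`. -/
noncomputable def empFreq {A : Type} {n : ℕ} (f : Fin n → A) (a : A) : ℝ :=
  ((Finset.univ.filter fun i => f i = a).card : ℝ) / n

/-- The `n`-sequence `f` is strongly `ε`-typical with respect to the pmf `q`:
`|(1/n)·N(a|f) − q(a)| ≤ ε·q(a)` for every symbol `a`. -/
def StronglyTypical {A : Type} {n : ℕ} (q : A → ℝ) (ε : ℝ) (f : Fin n → A) : Prop :=
  ∀ a, |empFreq f a - q a| ≤ ε * q a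

/-
Change of measure: if `(xⁿ, yⁿ, zⁿ)` is typical, every symbol in it has positive probability and
`∏ P(zᵢ | xᵢ) = 2^{-∑ ι(xᵢ, yᵢ, zᵢ)} · ∏ P(zᵢ | xᵢ, yᵢ)` with
`ι = log P(x,y,z) P(x) / (P(x,y) P(x,z))`. Typicality puts `∑ ι(xᵢ, yᵢ, zᵢ)` within `n ε E|ι|`
of `n E ι = n I(Y;Z|X)`, so `δ(ε) = ε E|ι|` works, and `∏ P(zᵢ | xᵢ, yᵢ)` sums to one over `zⁿ`.
-/

section Typical

variable {A : Type} {n : ℕ} {q : A → ℝ} {ε : ℝ} {f : Fin n → A}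

lemma natCast_card_filter_eq_mul_empFreq (f : Fin n → A) (a : A) :
    ((univ.filter fun i => f i = a).card : ℝ) = n * empFreq f a := by
  rcases n.eq_zero_or_pos with rfl | hn
  · simp
  · rw [empFreq, mul_div_cancel₀ _ (by positivity)]

lemma StronglyTypical.abs_card_filter_sub_le (ht : StronglyTypical q ε f) (a : A) :
    |((univ.filter fun i => f i = a).card : ℝ) - n * q a| ≤ n * ε * q a := by
  rw [natCast_card_filter_eq_mul_empFreq, ← mul_sub, abs_mul, Nat.abs_cast, mul_assoc]
  exact mul_le_mul_of_nonneg_left (ht a) n.cast_nonneg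

lemma StronglyTypical.apply_ne_zero (ht : StronglyTypical q ε f) (i : Fin n) : q (f i) ≠ 0 := by
  intro h
  have hfreq := ht (f i)
  rw [h, sub_zero, mul_zero, abs_nonpos_iff] at hfreq
  have hcard : 0 < (univ.filter fun j => f j = f i).card := card_pos.mpr ⟨i, by simp⟩
  have hn : 0 < n := i.pos
  exact (div_pos (by exact_mod_cast hcard) (by exact_mod_cast hn)).ne' hfreq

lemma StronglyTypical.abs_sum_comp_sub_le [Fintype A] (ht : StronglyTypical q ε f)
    (g : A → ℝ) :
    |∑ i, g (f i) - n * ∑ a, q a * g a| ≤ n * ε * ∑ a, q a * |g a| := by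
  rw [← sum_fiberwise' univ f g, mul_sum, mul_sum, ← sum_sub_distrib]
  refine (abs_sum_le_sum_abs _ _).trans (sum_le_sum fun a _ => ?_)
  calc |∑ i ∈ univ.filter (fun i => f i = a), g a - n * (q a * g a)|
      = |((univ.filter fun i => f i = a).card : ℝ) - n * q a| * |g a| := by
        rw [sum_const, nsmul_eq_mul, ← abs_mul, sub_mul, mul_assoc]
    _ ≤ n * ε * q a * |g a| :=
        mul_le_mul_of_nonneg_right (ht.abs_card_filter_sub_le a) (abs_nonneg _)
    _ = n * ε * (q a * |g a|) := by ring

end Typical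

lemma sum_mul_logb_pr_eq_neg_ent {A : Type} [Fintype A] (μ : Ω → ℝ) (X : Ω → A) :
    ∑ ω, μ ω * Real.logb 2 (pr μ X (X ω)) = -ent μ X := by
  rw [ent, neg_neg, ← sum_fiberwise univ X]
  refine sum_congr rfl fun a _ => ?_
  rw [sum_congr rfl fun ω hω => by rw [(mem_filter.mp hω).2], ← sum_mul, pr, sum_filter]

section Triple

variable {𝒳 𝒴 𝒵 : Type} [Fintype 𝒴] [Fintype 𝒵] (p : 𝒳 × 𝒴 × 𝒵 → ℝ)

lemma pr_x_eq_sum [Fintype 𝒳] (u : 𝒳) :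
    pr p (fun a => a.1) u = ∑ bc : 𝒴 × 𝒵, p (u, bc.1, bc.2) := by
  rw [pr, Fintype.sum_prod_type, Fintype.sum_eq_single u (by simp +contextual)]
  simp [Fintype.sum_prod_type]

lemma pr_yx_eq_sum [Fintype 𝒳] (u : 𝒳) (v : 𝒴) :
    pr p (fun a => (a.2.1, a.1)) (v, u) = ∑ c, p (u, v, c) := by
  rw [pr, Fintype.sum_prod_type, Fintype.sum_eq_single u (by simp +contextual),
    Fintype.sum_prod_type, Fintype.sum_eq_single v (by simp +contextual)]
  simp

lemma pr_zx_eq_sum [Fintype 𝒳] (u : 𝒳) (w : 𝒵) :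
    pr p (fun a => (a.2.2, a.1)) (w, u) = ∑ b, p (u, b, w) := by
  rw [pr, Fintype.sum_prod_type, Fintype.sum_eq_single u (by simp +contextual)]
  simp [Fintype.sum_prod_type]

lemma pr_yzx_eq [Fintype 𝒳] (u : 𝒳) (v : 𝒴) (w : 𝒵) :
    pr p (fun a => (a.2.1, a.2.2, a.1)) (v, w, u) = p (u, v, w) := by
  rw [pr, Fintype.sum_eq_single (u, v, w) (by aesop)]
  simp

/-- `ι(x,y,z) = log P(x,y,z) P(x) / (P(x,y) P(x,z))`, written as a sum of logarithms so that its
mean is `I(Y;Z|X)` without any positivity assumption. -/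
noncomputable def condInfoDensity (a : 𝒳 × 𝒴 × 𝒵) : ℝ :=
  Real.logb 2 (p a) + Real.logb 2 (∑ bc : 𝒴 × 𝒵, p (a.1, bc.1, bc.2))
    - Real.logb 2 (∑ c, p (a.1, a.2.1, c)) - Real.logb 2 (∑ b, p (a.1, b, a.2.2))

lemma sum_mul_condInfoDensity [Fintype 𝒳] :
    ∑ a, p a * condInfoDensity p a = cmi p (fun a => a.2.1) (fun a => a.2.2) (fun a => a.1) := by
  have hX := sum_mul_logb_pr_eq_neg_ent p (fun a => a.1)
  have hYX := sum_mul_logb_pr_eq_neg_ent p (fun a => (a.2.1, a.1))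
  have hZX := sum_mul_logb_pr_eq_neg_ent p (fun a => (a.2.2, a.1))
  have hYZX := sum_mul_logb_pr_eq_neg_ent p (fun a => (a.2.1, a.2.2, a.1))
  simp only [pr_x_eq_sum, pr_yx_eq_sum, pr_zx_eq_sum, pr_yzx_eq, Prod.mk.eta] at hX hYX hZX hYZX
  simp only [cmi, condInfoDensity, mul_add, mul_sub, sum_add_distrib, sum_sub_distrib,
    hX, hYX, hZX, hYZX]
  ring

lemma div_sum_eq_rpow_neg_condInfoDensity_mul (hp0 : ∀ a, 0 ≤ p a) {u : 𝒳} {v : 𝒴} {w : 𝒵}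
    (hpos : 0 < p (u, v, w)) :
    (∑ b, p (u, b, w)) / (∑ bc : 𝒴 × 𝒵, p (u, bc.1, bc.2))
      = 2 ^ (-condInfoDensity p (u, v, w)) * (p (u, v, w) / ∑ c, p (u, v, c)) := by
  have hXZ : 0 < ∑ b, p (u, b, w) :=
    hpos.trans_le (single_le_sum (fun b _ => hp0 (u, b, w)) (mem_univ v))
  have hXY : 0 < ∑ c, p (u, v, c) :=
    hpos.trans_le (single_le_sum (fun c _ => hp0 (u, v, c)) (mem_univ w))
  have hX : 0 < ∑ bc : 𝒴 × 𝒵, p (u, bc.1, bc.2) :=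
    hpos.trans_le (single_le_sum (fun bc _ => hp0 (u, bc.1, bc.2)) (mem_univ (v, w)))
  have hdensity : -condInfoDensity p (u, v, w) = Real.logb 2 ((∑ c, p (u, v, c)) *
      (∑ b, p (u, b, w)) / (p (u, v, w) * ∑ bc : 𝒴 × 𝒵, p (u, bc.1, bc.2))) := by
    rw [Real.logb_div (by positivity) (by positivity), Real.logb_mul hXY.ne' hXZ.ne',
      Real.logb_mul hpos.ne' hX.ne', condInfoDensity]
    ring
  rw [hdensity, Real.rpow_logb two_pos (by norm_num) (by positivity)]
  field_simp

lemma prod_div_sum_le_of_stronglyTypical [Fintype 𝒳] (hp0 : ∀ a, 0 ≤ p a) {n : ℕ} {ε : ℝ}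
    {x : Fin n → 𝒳} {y : Fin n → 𝒴} {z : Fin n → 𝒵}
    (hz : StronglyTypical p ε fun i => (x i, y i, z i)) :
    ∏ i, (∑ b, p (x i, b, z i)) / (∑ bc : 𝒴 × 𝒵, p (x i, bc.1, bc.2))
      ≤ 2 ^ (-(n : ℝ) * (cmi p (fun a => a.2.1) (fun a => a.2.2) (fun a => a.1)
          - ε * ∑ a, p a * |condInfoDensity p a|))
        * ∏ i, p (x i, y i, z i) / ∑ c, p (x i, y i, c) := by
  have hpos : ∀ i, 0 < p (x i, y i, z i) := fun i => (hp0 _).lt_of_ne' (hz.apply_ne_zero i)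
  have hmean := hz.abs_sum_comp_sub_le (condInfoDensity p)
  rw [sum_mul_condInfoDensity] at hmean
  have hexponent : -∑ i, condInfoDensity p (x i, y i, z i)
      ≤ -(n : ℝ) * (cmi p (fun a => a.2.1) (fun a => a.2.2) (fun a => a.1)
          - ε * ∑ a, p a * |condInfoDensity p a|) := by
    linarith [(abs_le.mp hmean).1]
  calc _ = ∏ i, 2 ^ (-condInfoDensity p (x i, y i, z i))
          * (p (x i, y i, z i) / ∑ c, p (x i, y i, c)) :=
        prod_congr rfl fun i _ => div_sum_eq_rpow_neg_condInfoDensity_mul p hp0 (hpos i)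
    _ = 2 ^ (-∑ i, condInfoDensity p (x i, y i, z i))
          * ∏ i, p (x i, y i, z i) / ∑ c, p (x i, y i, c) := by
        rw [prod_mul_distrib, ← sum_neg_distrib, Real.rpow_sum_of_pos two_pos]
    _ ≤ _ := mul_le_mul_of_nonneg_right (Real.rpow_le_rpow_of_exponent_le one_le_two hexponent)
        (prod_nonneg fun i _ => div_nonneg (hp0 _) (sum_nonneg fun c _ => hp0 _))

end Triple

lemma sum_pi_prod_div_sum_eq_one {ι B : Type} [Fintype ι] [DecidableEq ι] [Fintype B]
    (w : ι → B → ℝ) (hw : ∀ i, ∑ b, w i b ≠ 0) :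
    ∑ z : ι → B, ∏ i, w i (z i) / ∑ b, w i b = 1 := by
  rw [← Fintype.prod_sum fun i b => w i b / ∑ b, w i b]
  exact prod_eq_one fun i _ => by rw [← sum_div, div_self (hw i)]

/-- **Joint typicality lemma**: for every joint pmf `p` on `𝒳 × 𝒴 × 𝒵` there is a
function `δ` with `δ(ε) → 0` as `ε → 0⁺` such that for all `n`, all `ε > 0` and all
`(xⁿ,yⁿ)` jointly `ε`-typical for the `(X,Y)`-marginal of `p`: if `Z̃ⁿ` has independent
components with `Z̃ᵢ ∼ P_{Z|X}(·|xᵢ)`, then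
`Pr{(xⁿ,yⁿ,Z̃ⁿ) ∈ T_ε⁽ⁿ⁾} ≤ 2^{−n(I(Y;Z|X) − δ(ε))}`. -/
theorem joint_typicality_lemma
    {𝒳 𝒴 𝒵 : Type} [Fintype 𝒳] [Fintype 𝒴] [Fintype 𝒵]
    (p : 𝒳 × 𝒴 × 𝒵 → ℝ) (hp : IsPMF p) :
    ∃ δ : ℝ → ℝ, Filter.Tendsto δ (nhdsWithin 0 (Set.Ioi 0)) (nhds 0) ∧
      ∀ (n : ℕ) (ε : ℝ), 0 < ε → ∀ (x : Fin n → 𝒳) (y : Fin n → 𝒴),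
        StronglyTypical (fun ab : 𝒳 × 𝒴 => ∑ c, p (ab.1, ab.2, c)) ε
            (fun i => (x i, y i)) →
        (∑ z : Fin n → 𝒵,
            (∏ i, (∑ b, p (x i, b, z i)) / (∑ bc : 𝒴 × 𝒵, p (x i, bc.1, bc.2))) *
              (if StronglyTypical p ε (fun i => (x i, y i, z i)) then (1 : ℝ) else 0))
          ≤ 2 ^ (-(n : ℝ) * (cmi p (fun q => q.2.1) (fun q => q.2.2) (fun q => q.1)
              - δ ε)) := by
  obtain ⟨hp0, -⟩ := hp
  refine ⟨fun ε => ε * ∑ a, p a * |condInfoDensity p a|,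
    ((continuous_id.mul continuous_const).tendsto' 0 0 (zero_mul _)).mono_left
      nhdsWithin_le_nhds, ?_⟩
  intro n ε _ x y hxy
  have hXY : ∀ i, ∑ c, p (x i, y i, c) ≠ 0 := fun i => hxy.apply_ne_zero i
  calc _ ≤ ∑ z : Fin n → 𝒵, 2 ^ (-(n : ℝ) * (cmi p (fun a => a.2.1) (fun a => a.2.2)
            (fun a => a.1) - ε * ∑ a, p a * |condInfoDensity p a|))
          * ∏ i, p (x i, y i, z i) / ∑ c, p (x i, y i, c) := by
        refine sum_le_sum fun z _ => ?_
        split_ifs with hz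
        · rw [mul_one]
          exact prod_div_sum_le_of_stronglyTypical p hp0 hz
        · rw [mul_zero]
          exact mul_nonneg (Real.rpow_nonneg zero_le_two _)
            (prod_nonneg fun i _ => div_nonneg (hp0 _) (sum_nonneg fun c _ => hp0 _))
    _ = _ := by
        rw [← mul_sum, sum_pi_prod_div_sum_eq_one (fun i c => p (x i, y i, c)) hXY, mul_one]

end Paper
end

section
/- Let M1, M2 be independent finite-valued random variables that are jointly independent of the finite-valued sequence S^n = (S_1,…,S_n), and let M12 = f12(M1,S^n) for a deterministic function f12. Then for every i ∈ {1,…,n}, M2 is conditionally independent of (M1,S^n) given (M12,S^{i−1}). Consequently, if X1^n = f1(M1,S^n) and X2^n = f2(M2,M12), then X_{2,i} is conditionally independent of (X_{1,i},S_i) given U_i = (M12,S^{i−1}), i.e., the Markov chain X_{2,i} − U_i − (X_{1,i},S_i) holds. -/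
open scoped BigOperators Classical
open Finset

namespace Paper

variable {Ω : Type} [Fintype Ω]

/-!
M₂ is independent of Y = (M₁, Sⁿ), and Uᵢ = (M₁₂, Sⁱ⁻¹) = g(Y) is a function of Y. Whenever
X ⟂ Y, the variables φ(X, g Y) and ψ(Y) are conditionally independent given g(Y): on the event
g(Y) = c the first one equals φ(X, c), a function of X alone, hence independent of the function
(ψ(Y), g(Y)) of Y. Both Markov chains are instances of this, with X = M₂.
-/

section

variable {A B C D : Type} (μ : Ω → ℝ)

theorem pr_congr {X : Ω → A} {Y : Ω → B} {a : A} {b : B} (h : ∀ ω, X ω = a ↔ Y ω = b) :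
    pr μ X a = pr μ Y b := by
  simp only [pr, h]

-- Sums over values run over the finite range `univ.image X`, so no value type needs to be finite.
theorem pr_comp_fst (X : Ω → A) (Y : Ω → B) (F : A → C) (c : C) (b : B) :
    pr μ (fun ω => (F (X ω), Y ω)) (c, b)
      = ∑ x ∈ univ.image X with F x = c, pr μ (fun ω => (X ω, Y ω)) (x, b) := by
  simp only [pr]
  rw [Finset.sum_comm]
  refine sum_congr rfl fun ω _ => ?_
  simp [Prod.ext_iff, ite_and, eq_comm]

theorem pr_comp (X : Ω → A) (F : A → C) (c : C) :
    pr μ (fun ω => F (X ω)) c = ∑ x ∈ univ.image X with F x = c, pr μ X x := by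
  have pr_unit : ∀ {E : Type} (W : Ω → E) (e : E), pr μ (fun ω => (W ω, ())) (e, ()) = pr μ W e :=
    fun W e => pr_congr μ fun ω => by simp
  simpa only [pr_unit] using pr_comp_fst μ X (fun _ => ()) F c ()

theorem sum_image_pr_pair (X : Ω → A) (Y : Ω → B) (b : B) :
    ∑ x ∈ univ.image X, pr μ (fun ω => (X ω, Y ω)) (x, b) = pr μ Y b := by
  simp only [pr]
  rw [Finset.sum_comm]
  refine sum_congr rfl fun ω _ => ?_
  simp [Prod.ext_iff, ite_and, eq_comm]

theorem sum_image_pr (X : Ω → A) : ∑ x ∈ univ.image X, pr μ X x = ∑ ω, μ ω := by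
  simpa [pr] using (pr_comp μ X (fun _ => ()) ()).symm

def Indep (X : Ω → A) (Y : Ω → B) : Prop :=
  ∀ a b, pr μ (fun ω => (X ω, Y ω)) (a, b) = pr μ X a * pr μ Y b

variable {μ}

theorem Indep.symm {X : Ω → A} {Y : Ω → B} (h : Indep μ X Y) : Indep μ Y X := fun b a => by
  rw [mul_comm, ← h a b]
  exact pr_congr μ fun ω => by simp [and_comm]

theorem Indep.comp_left {X : Ω → A} {Y : Ω → B} (h : Indep μ X Y) (F : A → C) :
    Indep μ (fun ω => F (X ω)) Y := fun c b => by
  rw [pr_comp_fst, pr_comp, Finset.sum_mul]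
  exact sum_congr rfl fun x _ => h x b

theorem Indep.comp {X : Ω → A} {Y : Ω → B} (h : Indep μ X Y) (F : A → C) (G : B → D) :
    Indep μ (fun ω => F (X ω)) (fun ω => G (Y ω)) :=
  ((h.comp_left F).symm.comp_left G).symm

theorem Indep.condIndep_comp {X : Ω → A} {Y : Ω → B} (h : Indep μ X Y) {A' B' : Type}
    (φ : A → C → A') (ψ : B → B') (g : B → C) :
    CondIndep μ (fun ω => φ (X ω) (g (Y ω))) (fun ω => ψ (Y ω)) (fun ω => g (Y ω)) := by
  intro a b c _
  have joint : pr μ (fun ω => (φ (X ω) (g (Y ω)), ψ (Y ω), g (Y ω))) (a, b, c)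
      = pr μ (fun ω => φ (X ω) c) a * pr μ (fun ω => (ψ (Y ω), g (Y ω))) (b, c) := by
    rw [← h.comp (φ · c) (fun y => (ψ y, g y))]
    refine pr_congr μ fun ω => ?_
    simp only [Prod.mk.injEq]
    constructor <;> rintro ⟨h1, h2, rfl⟩ <;> exact ⟨h1, h2, rfl⟩
  have first : pr μ (fun ω => (φ (X ω) (g (Y ω)), g (Y ω))) (a, c)
      = pr μ (fun ω => φ (X ω) c) a * pr μ (fun ω => g (Y ω)) c := by
    rw [← h.comp (φ · c) g]
    refine pr_congr μ fun ω => ?_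
    simp only [Prod.mk.injEq]
    constructor <;> rintro ⟨h1, rfl⟩ <;> exact ⟨h1, rfl⟩
  rw [joint, first]
  ring

theorem indep_of_pr_triple_eq_mul (hμ : ∑ ω, μ ω = 1) {X : Ω → A} {Y : Ω → B} {Z : Ω → C}
    (h : ∀ a b c, pr μ (fun ω => (X ω, Y ω, Z ω)) (a, b, c) = pr μ X a * pr μ Y b * pr μ Z c) :
    Indep μ Y (fun ω => (X ω, Z ω)) := by
  have swap : ∀ a b c, pr μ (fun ω => (Y ω, X ω, Z ω)) (b, a, c)
      = pr μ (fun ω => (X ω, Y ω, Z ω)) (a, b, c) :=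
    fun a b c => pr_congr μ fun ω => by simp only [Prod.mk.injEq]; tauto
  have hXZ : ∀ a c, pr μ (fun ω => (X ω, Z ω)) (a, c) = pr μ X a * pr μ Z c := fun a c => by
    calc pr μ (fun ω => (X ω, Z ω)) (a, c)
        = ∑ b ∈ univ.image Y, pr μ (fun ω => (Y ω, X ω, Z ω)) (b, a, c) :=
          (sum_image_pr_pair μ Y _ (a, c)).symm
      _ = pr μ X a * pr μ Z c * ∑ b ∈ univ.image Y, pr μ Y b := by
          rw [Finset.mul_sum]
          exact sum_congr rfl fun b _ => by rw [swap, h]; ring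
      _ = pr μ X a * pr μ Z c := by rw [sum_image_pr, hμ, mul_one]
  rintro b ⟨a, c⟩
  rw [swap, h, hXZ]
  ring

end

theorem markov_chain_one_way_general
    {Ω : Type} [Fintype Ω] (μ : Ω → ℝ) (hμ : IsPMF μ)
    {n : ℕ} {𝒮 𝒳₁ 𝒳₂ ℳ₁ ℳ₂ ℳ₁₂ : Type}
    (S : Fin n → Ω → 𝒮) (M1 : Ω → ℳ₁) (M2 : Ω → ℳ₂)
    (f12 : ℳ₁ → (Fin n → 𝒮) → ℳ₁₂)
    (f1 : ℳ₁ → (Fin n → 𝒮) → Fin n → 𝒳₁)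
    (f2 : ℳ₂ → ℳ₁₂ → Fin n → 𝒳₂)
    (M12 : Ω → ℳ₁₂) (hM12 : ∀ ω, M12 ω = f12 (M1 ω) (fun i => S i ω))
    (X1 : Fin n → Ω → 𝒳₁) (hX1 : ∀ i ω, X1 i ω = f1 (M1 ω) (fun j => S j ω) i)
    (X2 : Fin n → Ω → 𝒳₂) (hX2 : ∀ i ω, X2 i ω = f2 (M2 ω) (M12 ω) i)
    (hindep : ∀ (m1 : ℳ₁) (m2 : ℳ₂) (s : Fin n → 𝒮),
      pr μ (fun ω => (M1 ω, M2 ω, fun i => S i ω)) (m1, m2, s)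
        = pr μ M1 m1 * pr μ M2 m2 * pr μ (fun ω => fun i => S i ω) s) :
    ∀ i : Fin n,
      CondIndep μ M2 (fun ω => (M1 ω, fun j => S j ω))
        (fun ω => (M12 ω, fun j : {j : Fin n // j < i} => S j.1 ω)) ∧
      CondIndep μ (X2 i) (fun ω => (X1 i ω, S i ω))
        (fun ω => (M12 ω, fun j : {j : Fin n // j < i} => S j.1 ω)) := by
  intro i
  have hM2 : Indep μ M2 (fun ω => (M1 ω, fun j => S j ω)) := indep_of_pr_triple_eq_mul hμ.2 hindep
  obtain rfl : M12 = fun ω => f12 (M1 ω) (fun j => S j ω) := funext hM12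
  obtain rfl : X1 = fun i ω => f1 (M1 ω) (fun j => S j ω) i := funext fun i => funext (hX1 i)
  obtain rfl : X2 = fun i ω => f2 (M2 ω) (f12 (M1 ω) (fun j => S j ω)) i :=
    funext fun i => funext (hX2 i)
  let U : ℳ₁ × (Fin n → 𝒮) → ℳ₁₂ × ({j : Fin n // j < i} → 𝒮) :=
    fun y => (f12 y.1 y.2, fun j => y.2 j.1)
  exact ⟨hM2.condIndep_comp (fun m2 _ => m2) id U,
    hM2.condIndep_comp (fun m2 u => f2 m2 u.1 i) (fun y => (f1 y.1 y.2 i, y.2 i)) U⟩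

/-- Markov chains in the converse of Theorem 1: with `M₁, M₂` independent of each other
and of `Sⁿ`, and `M₁₂ = f₁₂(M₁,Sⁿ)`, for every `i` the chain
`M₂ − (M₁₂,Sⁱ⁻¹) − (M₁,Sⁿ)` holds; consequently, with `X₁ⁿ = f₁(M₁,Sⁿ)` and
`X₂ⁿ = f₂(M₂,M₁₂)`, the chain `X₂ᵢ − Uᵢ − (X₁ᵢ,Sᵢ)` holds, where `Uᵢ = (M₁₂,Sⁱ⁻¹)`. -/
theorem markov_chain_one_way
    {Ω : Type} [Fintype Ω] (μ : Ω → ℝ) (hμ : IsPMF μ)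
    {n : ℕ} {𝒮 𝒳₁ 𝒳₂ ℳ₁ ℳ₂ ℳ₁₂ : Type}
    [Fintype 𝒮] [Fintype 𝒳₁] [Fintype 𝒳₂]
    [Fintype ℳ₁] [Fintype ℳ₂] [Fintype ℳ₁₂]
    (S : Fin n → Ω → 𝒮) (M1 : Ω → ℳ₁) (M2 : Ω → ℳ₂)
    (f12 : ℳ₁ → (Fin n → 𝒮) → ℳ₁₂)
    (f1 : ℳ₁ → (Fin n → 𝒮) → Fin n → 𝒳₁)
    (f2 : ℳ₂ → ℳ₁₂ → Fin n → 𝒳₂)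
    (M12 : Ω → ℳ₁₂) (hM12 : ∀ ω, M12 ω = f12 (M1 ω) (fun i => S i ω))
    (X1 : Fin n → Ω → 𝒳₁) (hX1 : ∀ i ω, X1 i ω = f1 (M1 ω) (fun j => S j ω) i)
    (X2 : Fin n → Ω → 𝒳₂) (hX2 : ∀ i ω, X2 i ω = f2 (M2 ω) (M12 ω) i)
    (hindep : ∀ (m1 : ℳ₁) (m2 : ℳ₂) (s : Fin n → 𝒮),
      pr μ (fun ω => (M1 ω, M2 ω, fun i => S i ω)) (m1, m2, s)
        = pr μ M1 m1 * pr μ M2 m2 * pr μ (fun ω => fun i => S i ω) s) :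
    ∀ i : Fin n,
      CondIndep μ M2 (fun ω => (M1 ω, fun j => S j ω))
        (fun ω => (M12 ω, fun j : {j : Fin n // j < i} => S j.1 ω)) ∧
      CondIndep μ (X2 i) (fun ω => (X1 i ω, S i ω))
        (fun ω => (M12 ω, fun j : {j : Fin n // j < i} => S j.1 ω)) :=
  markov_chain_one_way_general μ hμ S M1 M2 f12 f1 f2 M12 hM12 X1 hX1 X2 hX2 hindep

end Paper
end

section
/- Let the pairs (S_{1,i},S_{2,i}), i = 1,…,n, be i.i.d. finite-valued, let M1 be a finite-valued random variable independent of (S1^n,S2^n), and let M12 = f12(M1,S1^n) for a deterministic function f12. Then I(M12;S1^n|S2^n) = Σ_{i=1}^n I(S_{1,i};U_i|S_{2,i}), where U_i = (M12, S1^{i−1}, S2_{i+1}^n). -/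
open scoped BigOperators Classical
open Finset

namespace Paper

variable {Ω : Type} [Fintype Ω]

/-!
By the chain rule, `I(M₁₂; S₁ⁿ | S₂ⁿ) = Σᵢ I(M₁₂; S₁ᵢ | S₁ⁱ⁻¹, S₂ⁿ)`, and the `i`-th term is
`H(S₁ᵢ | S₁ⁱ⁻¹, S₂ⁿ) - H(S₁ᵢ | M₁₂, S₁ⁱ⁻¹, S₂ⁿ)`. The pair `(S₁ᵢ, S₂ᵢ)` is independent of the
other pairs, so `S₁ᵢ` is conditionally independent of them given `S₂ᵢ` and the first entropy is
`H(S₁ᵢ | S₂ᵢ)`. The pairs before `i` are independent of `M₁` together with the pairs from `i` on,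
and `M₁₂` is a function of `S₁ⁱ⁻¹` and the latter; hence `S₂ⁱ⁻¹` is conditionally independent of
`S₁ᵢ` given `(M₁₂, S₁ⁱ⁻¹, S₂ᵢⁿ)`, and the second entropy is `H(S₁ᵢ | Uᵢ, S₂ᵢ)`. The difference
of the two is `I(S₁ᵢ; Uᵢ | S₂ᵢ)`.
-/

section Entropy

variable {A B C D : Type}

lemma pr_eq_of_eq_iff (μ : Ω → ℝ) {X : Ω → A} {Y : Ω → B} {a : A} {b : B}
    (h : ∀ ω, X ω = a ↔ Y ω = b) : pr μ X a = pr μ Y b := by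
  simp only [pr, h]

lemma pr_comp_s10 [Fintype A] (μ : Ω → ℝ) (X : Ω → A) (g : A → B) (b : B) :
    pr μ (fun ω => g (X ω)) b = ∑ a, if g a = b then pr μ X a else 0 := by
  calc pr μ (fun ω => g (X ω)) b
      = ∑ ω, ∑ a, if X ω = a then (if g a = b then μ ω else 0) else 0 := by simp [pr]
    _ = _ := by
      rw [sum_comm]
      refine sum_congr rfl fun a _ => ?_
      by_cases hg : g a = b <;> simp [hg, pr]

lemma sum_pr_pair [Fintype B] (μ : Ω → ℝ) (X : Ω → A) (Y : Ω → B) (a : A) :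
    ∑ b, pr μ (fun ω => (X ω, Y ω)) (a, b) = pr μ X a := by
  unfold pr
  rw [sum_comm]
  refine sum_congr rfl fun ω _ => ?_
  by_cases hX : X ω = a <;> simp [hX]

lemma le_pr_apply {μ : Ω → ℝ} (hμ : ∀ ω, 0 ≤ μ ω) (X : Ω → A) (ω : Ω) :
    μ ω ≤ pr μ X (X ω) := by
  have := single_le_sum (f := fun ω' => if X ω' = X ω then μ ω' else 0)
    (fun ω' _ => by split_ifs <;> simp [hμ]) (mem_univ ω)
  simpa [pr] using this

lemma ent_eq_neg_sum [Fintype A] (μ : Ω → ℝ) (X : Ω → A) :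
    ent μ X = -∑ ω, μ ω * Real.logb 2 (pr μ X (X ω)) := by
  rw [ent]
  congr 1
  set L := fun a => Real.logb 2 (pr μ X a)
  change ∑ a, pr μ X a * L a = ∑ ω, μ ω * L (X ω)
  simp only [pr, sum_mul, ite_mul, zero_mul]
  rw [sum_comm]
  simp

/-- Entropy only depends on which outcomes a random variable tells apart; in particular,
regrouping the components of a tuple of random variables does not change its entropy. -/
lemma ent_congr_of_eq_iff [Fintype A] [Fintype B] (μ : Ω → ℝ) {X : Ω → A} {Y : Ω → B}
    (h : ∀ ω ω', X ω = X ω' ↔ Y ω = Y ω') : ent μ X = ent μ Y := by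
  simp only [ent_eq_neg_sum, pr_eq_of_eq_iff μ fun ω' => h ω' _]

lemma ent_add_ent_of_condIndep [Fintype A] [Fintype B] [Fintype C] {μ : Ω → ℝ}
    (hμ : ∀ ω, 0 ≤ μ ω) {X : Ω → A} {Y : Ω → B} {Z : Ω → C} (h : CondIndep μ X Y Z) :
    ent μ (fun ω => (X ω, Y ω, Z ω)) + ent μ Z
      = ent μ (fun ω => (X ω, Z ω)) + ent μ (fun ω => (Y ω, Z ω)) := by
  simp only [ent_eq_neg_sum, ← neg_add, ← sum_add_distrib]
  congr 1
  refine sum_congr rfl fun ω _ => ?_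
  rcases (hμ ω).eq_or_lt with h0 | hpos
  · simp [← h0]
  have pos : ∀ {E : Type} (W : Ω → E), pr μ W (W ω) ≠ 0 :=
    fun W => (hpos.trans_le (le_pr_apply hμ W ω)).ne'
  rw [← mul_add, ← mul_add, ← Real.logb_mul (pos _) (pos Z), ← Real.logb_mul (pos _) (pos _),
    h (X ω) (Y ω) (Z ω) (pos Z)]

lemma condIndep_of_factor [Fintype A] [Fintype B] {μ : Ω → ℝ} {X : Ω → A} {Y : Ω → B}
    {Z : Ω → C} (φ : A → C → ℝ) (ψ : B → C → ℝ)
    (h : ∀ a b c, pr μ (fun ω => (X ω, Y ω, Z ω)) (a, b, c) = φ a c * ψ b c) :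
    CondIndep μ X Y Z := by
  have hXZ : ∀ a c, pr μ (fun ω => (X ω, Z ω)) (a, c) = φ a c * ∑ b, ψ b c := by
    intro a c
    rw [mul_sum, ← sum_pr_pair μ (fun ω => (X ω, Z ω)) Y]
    refine sum_congr rfl fun b _ => ?_
    rw [← h]
    exact pr_eq_of_eq_iff μ fun ω => by simp only [Prod.mk.injEq]; tauto
  have hYZ : ∀ b c, pr μ (fun ω => (Y ω, Z ω)) (b, c) = (∑ a, φ a c) * ψ b c := by
    intro b c
    rw [sum_mul, ← sum_pr_pair μ (fun ω => (Y ω, Z ω)) X]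
    refine sum_congr rfl fun a _ => ?_
    rw [← h]
    exact pr_eq_of_eq_iff μ fun ω => by simp only [Prod.mk.injEq]; tauto
  have hZ : ∀ c, pr μ Z c = (∑ a, φ a c) * ∑ b, ψ b c := by
    intro c
    rw [sum_mul, ← sum_pr_pair μ Z X]
    refine sum_congr rfl fun a _ => ?_
    rw [← hXZ]
    exact pr_eq_of_eq_iff μ fun ω => by simp only [Prod.mk.injEq]; tauto
  intro a b c _
  rw [h, hXZ, hYZ, hZ]
  ring

lemma condIndep_of_indep {E F G : Type} [Fintype A] [Fintype B] [Fintype D] [Fintype E]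
    {μ : Ω → ℝ} {W₁ : Ω → A} {W₂ : Ω → B} {p₁ : A → ℝ} {p₂ : B → ℝ}
    (hW : ∀ a b, pr μ (fun ω => (W₁ ω, W₂ ω)) (a, b) = p₁ a * p₂ b)
    {X : Ω → D} {Y : Ω → E} {U : Ω → F} {V : Ω → G}
    (g : A → E) (h : A → F) (x : F → B → D) (k : F → B → G)
    (hY : ∀ ω, Y ω = g (W₁ ω)) (hU : ∀ ω, U ω = h (W₁ ω))
    (hX : ∀ ω, X ω = x (U ω) (W₂ ω)) (hV : ∀ ω, V ω = k (U ω) (W₂ ω)) :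
    CondIndep μ X Y (fun ω => (U ω, V ω)) := by
  refine condIndep_of_factor (fun d z => ∑ b, if x z.1 b = d ∧ k z.1 b = z.2 then p₂ b else 0)
    (fun e z => ∑ a, if g a = e ∧ h a = z.1 then p₁ a else 0) ?_
  rintro d e ⟨u, v⟩
  let T : A × B → D × E × F × G := fun w => (x (h w.1) w.2, g w.1, h w.1, k (h w.1) w.2)
  have hT : (fun ω => (X ω, Y ω, U ω, V ω)) = fun ω => T (W₁ ω, W₂ ω) := by
    funext ω
    simp [T, hX, hY, hU, hV]
  rw [hT, pr_comp_s10, Fintype.sum_prod_type, mul_comm, sum_mul_sum]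
  refine sum_congr rfl fun a _ => sum_congr rfl fun b _ => ?_
  rw [hW, ite_zero_mul_ite_zero]
  congr 1
  simp only [T, Prod.mk.injEq, eq_iff_iff]
  constructor
  · rintro ⟨rfl, rfl, rfl, rfl⟩
    exact ⟨⟨rfl, rfl⟩, rfl, rfl⟩
  · rintro ⟨⟨rfl, rfl⟩, rfl, rfl⟩
    exact ⟨rfl, rfl, rfl, rfl⟩

end Entropy

section Information

variable {A B C D : Type} [Fintype A] [Fintype B] [Fintype C] [Fintype D]

noncomputable def condEnt (μ : Ω → ℝ) (X : Ω → A) (Z : Ω → C) : ℝ :=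
  ent μ (fun ω => (X ω, Z ω)) - ent μ Z

lemma cmi_eq_condEnt_sub (μ : Ω → ℝ) (X : Ω → A) (Y : Ω → B) (Z : Ω → C) :
    cmi μ X Y Z = condEnt μ X Z - condEnt μ X (fun ω => (Y ω, Z ω)) := by
  rw [cmi, condEnt, condEnt]
  ring

lemma cmi_comm (μ : Ω → ℝ) (X : Ω → A) (Y : Ω → B) (Z : Ω → C) :
    cmi μ X Y Z = cmi μ Y X Z := by
  have h : ent μ (fun ω => (X ω, Y ω, Z ω)) = ent μ (fun ω => (Y ω, X ω, Z ω)) :=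
    ent_congr_of_eq_iff μ fun ω ω' => by simp only [Prod.mk.injEq]; tauto
  rw [cmi, cmi, h]
  ring

lemma condEnt_congr_of_eq_iff (μ : Ω → ℝ) (X : Ω → A) {Z : Ω → C} {Z' : Ω → D}
    (h : ∀ ω ω', Z ω = Z ω' ↔ Z' ω = Z' ω') : condEnt μ X Z = condEnt μ X Z' := by
  rw [condEnt, condEnt, ent_congr_of_eq_iff μ h,
    ent_congr_of_eq_iff μ (Y := fun ω => (X ω, Z' ω)) fun ω ω' => by simp only [Prod.mk.injEq, h]]

lemma condEnt_eq_of_condIndep {μ : Ω → ℝ} (hμ : ∀ ω, 0 ≤ μ ω) {X : Ω → A} {Y : Ω → B}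
    {Z : Ω → C} (h : CondIndep μ X Y Z) :
    condEnt μ X (fun ω => (Y ω, Z ω)) = condEnt μ X Z := by
  have := ent_add_ent_of_condIndep hμ h
  rw [condEnt, condEnt]
  linarith

theorem cmi_pi_eq_sum {n : ℕ} (μ : Ω → ℝ) (M : Ω → A) (X : Fin n → Ω → B) (Z : Ω → C) :
    cmi μ M (fun ω j => X j ω) Z
      = ∑ k : Fin n, cmi μ M (X k) (fun ω => ((fun j : {j // j < k} => X j ω), Z ω)) := by
  -- prefixes are indexed by `m : ℕ` so that both ends `0` and `n` of the telescoping sum exist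
  set a : ℕ → ℝ := fun m => ent μ (fun ω => (M ω, (fun j : {j : Fin n // j.1 < m} => X j ω), Z ω))
  set b : ℕ → ℝ := fun m => ent μ (fun ω => ((fun j : {j : Fin n // j.1 < m} => X j ω), Z ω))
  have hk : ∀ k : Fin n, cmi μ M (X k) (fun ω => ((fun j : {j // j < k} => X j ω), Z ω))
      = (a k - a (k + 1)) - (b k - b (k + 1)) := by
    intro k
    have h₁ : ent μ (fun ω => (M ω, (fun j : {j // j < k} => X j ω), Z ω)) = a k :=
      ent_congr_of_eq_iff μ fun ω ω' => by
        simp only [Prod.mk.injEq, funext_iff, Subtype.forall]; grind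
    have h₂ : ent μ (fun ω => (X k ω, (fun j : {j // j < k} => X j ω), Z ω)) = b (k + 1) :=
      ent_congr_of_eq_iff μ fun ω ω' => by
        simp only [Prod.mk.injEq, funext_iff, Subtype.forall]; grind
    have h₃ : ent μ (fun ω => (M ω, X k ω, (fun j : {j // j < k} => X j ω), Z ω)) = a (k + 1) :=
      ent_congr_of_eq_iff μ fun ω ω' => by
        simp only [Prod.mk.injEq, funext_iff, Subtype.forall]; grind
    have h₄ : ent μ (fun ω => ((fun j : {j // j < k} => X j ω), Z ω)) = b k :=
      ent_congr_of_eq_iff μ fun ω ω' => by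
        simp only [Prod.mk.injEq, funext_iff, Subtype.forall]; grind
    rw [cmi, h₁, h₂, h₃, h₄]
    ring
  have hn : cmi μ M (fun ω j => X j ω) Z = (a 0 - a n) - (b 0 - b n) := by
    have h₁ : ent μ (fun ω => (M ω, Z ω)) = a 0 :=
      ent_congr_of_eq_iff μ fun ω ω' => by
        simp only [Prod.mk.injEq, funext_iff, Subtype.forall]; grind
    have h₂ : ent μ (fun ω => ((fun j => X j ω), Z ω)) = b n :=
      ent_congr_of_eq_iff μ fun ω ω' => by
        simp only [Prod.mk.injEq, funext_iff, Subtype.forall]; grind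
    have h₃ : ent μ (fun ω => (M ω, (fun j => X j ω), Z ω)) = a n :=
      ent_congr_of_eq_iff μ fun ω ω' => by
        simp only [Prod.mk.injEq, funext_iff, Subtype.forall]; grind
    have h₄ : ent μ Z = b 0 :=
      ent_congr_of_eq_iff μ fun ω ω' => by
        simp only [Prod.mk.injEq, funext_iff, Subtype.forall]; grind
    rw [cmi, h₁, h₂, h₃, h₄]
    ring
  rw [hn, sum_congr rfl fun k _ => hk k,
    Fin.sum_univ_eq_sum_range (fun m => (a m - a (m + 1)) - (b m - b (m + 1))), sum_sub_distrib,
    sum_range_sub', sum_range_sub']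

end Information

section Splice

variable {n : ℕ} {V : Type}

def spliceAt (i : Fin n) (l : {j // j < i} → V) (s : V) (t : {j // i < j} → V) : Fin n → V :=
  fun j => if h : j < i then l ⟨j, h⟩ else if h' : i < j then t ⟨j, h'⟩ else s

variable {i : Fin n} {l : {j // j < i} → V} {s : V} {t : {j // i < j} → V}

@[simp]
lemma spliceAt_of_lt (j : {j // j < i}) : spliceAt i l s t j = l j := by
  simp [spliceAt, j.2]

@[simp]
lemma spliceAt_self : spliceAt i l s t i = s := by
  simp [spliceAt]

@[simp]
lemma spliceAt_of_gt (j : {j // i < j}) : spliceAt i l s t j = t j := by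
  simp [spliceAt, j.2, lt_asymm j.2]

lemma eq_spliceAt_iff {v : Fin n → V} :
    v = spliceAt i l s t ↔
      (fun j : {j // j < i} => v j) = l ∧ v i = s ∧ (fun j : {j // i < j} => v j) = t := by
  constructor
  · rintro rfl
    simp
  · rintro ⟨rfl, rfl, rfl⟩
    funext j
    rcases lt_trichotomy j i with h | rfl | h
    · exact (spliceAt_of_lt (l := fun j => v j) (s := v i) (t := fun j => v j) ⟨j, h⟩).symm
    · simp
    · exact (spliceAt_of_gt (l := fun j => v j) (s := v i) (t := fun j => v j) ⟨j, h⟩).symm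

lemma spliceAt_restrict (i : Fin n) (v : Fin n → V) :
    spliceAt i (fun j => v j) (v i) (fun j => v j) = v :=
  (eq_spliceAt_iff.2 ⟨rfl, rfl, rfl⟩).symm

lemma prod_eq_prod_lt_mul_mul_prod_gt {ι M : Type} [Fintype ι] [LinearOrder ι] [CommMonoid M]
    (i : ι) (f : ι → M) :
    ∏ j, f j = (∏ j : {j // j < i}, f j) * f i * ∏ j : {j // i < j}, f j := by
  rw [← prod_subtype (univ.filter (· < i)) (by simp),
    ← prod_subtype (univ.filter (i < ·)) (by simp), mul_assoc,
    ← prod_insert (by simp), ← prod_union]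
  · congr 1
    ext j
    simp [em]
  · simp only [disjoint_left, mem_filter, mem_univ, true_and, mem_insert, not_or]
    exact fun j hj => ⟨hj.ne, lt_asymm hj⟩

lemma prod_spliceAt {M : Type} [CommMonoid M] (f : V → M) :
    ∏ j, f (spliceAt i l s t j) = (∏ j, f (l j)) * f s * ∏ j, f (t j) := by
  simp [prod_eq_prod_lt_mul_mul_prod_gt i]

end Splice

section Memoryless

variable {n : ℕ} {β γ : Type} {μ : Ω → ℝ} {V : Fin n → Ω → β} {q : β → ℝ}

lemma pr_split_of_iid (hiid : ∀ v, pr μ (fun ω j => V j ω) v = ∏ j, q (v j)) (i : Fin n)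
    (lt : ({j // j < i} → β) × ({j // i < j} → β)) (s : β) :
    pr μ (fun ω => (((fun j : {j // j < i} => V j ω), fun j : {j // i < j} => V j ω), V i ω))
      (lt, s) = ((∏ j, q (lt.1 j)) * ∏ j, q (lt.2 j)) * q s := by
  obtain ⟨l, t⟩ := lt
  rw [pr_eq_of_eq_iff μ (Y := fun ω j => V j ω) (b := spliceAt i l s t), hiid, prod_spliceAt]
  · ring
  · intro ω
    rw [eq_spliceAt_iff]
    simp only [Prod.mk.injEq]
    tauto

lemma pr_split_of_indep_iid (M : Ω → γ)
    (hindep : ∀ m v, pr μ (fun ω => (M ω, fun j => V j ω)) (m, v)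
      = pr μ M m * pr μ (fun ω j => V j ω) v)
    (hiid : ∀ v, pr μ (fun ω j => V j ω) v = ∏ j, q (v j)) (i : Fin n)
    (l : {j // j < i} → β) (r : γ × β × ({j // i < j} → β)) :
    pr μ (fun ω => ((fun j : {j // j < i} => V j ω), M ω, V i ω, fun j : {j // i < j} => V j ω))
      (l, r) = (∏ j, q (l j)) * (pr μ M r.1 * (q r.2.1 * ∏ j, q (r.2.2 j))) := by
  obtain ⟨m, s, t⟩ := r
  rw [pr_eq_of_eq_iff μ (Y := fun ω => (M ω, fun j => V j ω)) (b := (m, spliceAt i l s t)),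
    hindep, hiid, prod_spliceAt]
  · ring
  · intro ω
    simp only [Prod.mk.injEq, eq_spliceAt_iff]
    tauto

end Memoryless

section Converse

variable {n : ℕ} {𝒮₁ 𝒮₂ ℳ₁ ℳ₁₂ : Type} [Fintype 𝒮₁] [Fintype 𝒮₂] [Fintype ℳ₁] [Fintype ℳ₁₂]
  {μ : Ω → ℝ} {S1 : Fin n → Ω → 𝒮₁} {S2 : Fin n → Ω → 𝒮₂} {q : 𝒮₁ × 𝒮₂ → ℝ}

lemma condEnt_coord_of_iid (hμ : ∀ ω, 0 ≤ μ ω)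
    (hiid : ∀ s : Fin n → 𝒮₁ × 𝒮₂, pr μ (fun ω j => (S1 j ω, S2 j ω)) s = ∏ j, q (s j))
    (k : Fin n) :
    condEnt μ (S1 k) (fun ω => ((fun j : {j // j < k} => S1 j ω), fun j => S2 j ω))
      = condEnt μ (S1 k) (S2 k) := by
  have hci : CondIndep μ (S1 k)
      (fun ω => ((fun j : {j // j < k} => S1 j ω), (fun j : {j // j < k} => S2 j ω),
        fun j : {j // k < j} => S2 j ω))
      (fun ω => ((), S2 k ω)) :=
    condIndep_of_indep (pr_split_of_iid (V := fun j ω => (S1 j ω, S2 j ω)) hiid k)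
      (fun lt => ((fun j => (lt.1 j).1), (fun j => (lt.1 j).2), fun j => (lt.2 j).2))
      (fun _ => ()) (fun _ w => w.1) (fun _ w => w.2)
      (fun _ => rfl) (fun _ => rfl) (fun _ => rfl) (fun _ => rfl)
  calc _ = condEnt μ (S1 k) (fun ω =>
          (((fun j : {j // j < k} => S1 j ω), (fun j : {j // j < k} => S2 j ω),
            fun j : {j // k < j} => S2 j ω), ((), S2 k ω))) :=
        condEnt_congr_of_eq_iff μ _ fun ω ω' => by
          simp only [Prod.mk.injEq, funext_iff, Subtype.forall]; grind
    _ = condEnt μ (S1 k) (fun ω => ((), S2 k ω)) := condEnt_eq_of_condIndep hμ hci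
    _ = _ := condEnt_congr_of_eq_iff μ _ fun ω ω' => by simp

lemma condEnt_coord_of_encoder (hμ : ∀ ω, 0 ≤ μ ω) {M1 : Ω → ℳ₁}
    (hiid : ∀ s : Fin n → 𝒮₁ × 𝒮₂, pr μ (fun ω j => (S1 j ω, S2 j ω)) s = ∏ j, q (s j))
    (hindep : ∀ (m : ℳ₁) (s : Fin n → 𝒮₁ × 𝒮₂),
      pr μ (fun ω => (M1 ω, fun j => (S1 j ω, S2 j ω))) (m, s)
        = pr μ M1 m * pr μ (fun ω j => (S1 j ω, S2 j ω)) s)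
    {f12 : ℳ₁ → (Fin n → 𝒮₁) → ℳ₁₂} {M12 : Ω → ℳ₁₂}
    (hM12 : ∀ ω, M12 ω = f12 (M1 ω) (fun j => S1 j ω)) (k : Fin n) :
    condEnt μ (S1 k) (fun ω => (M12 ω, (fun j : {j // j < k} => S1 j ω), fun j => S2 j ω))
      = condEnt μ (S1 k) (fun ω => ((M12 ω, (fun j : {j // j < k} => S1 j ω),
          fun j : {j // k < j} => S2 j ω), S2 k ω)) := by
  have hci : CondIndep μ (S1 k) (fun ω => fun j : {j // j < k} => S2 j ω)
      (fun ω => ((fun j : {j // j < k} => S1 j ω), (M12 ω, S2 k ω,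
        fun j : {j // k < j} => S2 j ω))) :=
    condIndep_of_indep
      (pr_split_of_indep_iid (V := fun j ω => (S1 j ω, S2 j ω)) M1 hindep hiid k)
      (fun l j => (l j).2) (fun l j => (l j).1) (fun _ w => w.2.1.1)
      (fun u w => (f12 w.1 (spliceAt k u w.2.1.1 fun j => (w.2.2 j).1), w.2.1.2,
        fun j => (w.2.2 j).2))
      (fun _ => rfl) (fun _ => rfl) (fun _ => rfl)
      (fun ω => by rw [hM12, spliceAt_restrict k (fun j => S1 j ω)])
  calc _ = condEnt μ (S1 k) (fun ω => ((fun j : {j // j < k} => S2 j ω),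
          (fun j : {j // j < k} => S1 j ω), (M12 ω, S2 k ω, fun j : {j // k < j} => S2 j ω))) :=
        condEnt_congr_of_eq_iff μ _ fun ω ω' => by
          simp only [Prod.mk.injEq, funext_iff, Subtype.forall]; grind
    _ = condEnt μ (S1 k) (fun ω => ((fun j : {j // j < k} => S1 j ω),
          (M12 ω, S2 k ω, fun j : {j // k < j} => S2 j ω))) := condEnt_eq_of_condIndep hμ hci
    _ = _ := condEnt_congr_of_eq_iff μ _ fun ω ω' => by
          simp only [Prod.mk.injEq]; tauto

end Converse

theorem cmi_state_decomposition_two_way_general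
    {Ω : Type} [Fintype Ω] (μ : Ω → ℝ) (hμ : IsPMF μ)
    {n : ℕ} {𝒮₁ 𝒮₂ ℳ₁ ℳ₁₂ : Type}
    [Fintype 𝒮₁] [Fintype 𝒮₂] [Fintype ℳ₁] [Fintype ℳ₁₂]
    (S1 : Fin n → Ω → 𝒮₁) (S2 : Fin n → Ω → 𝒮₂) (M1 : Ω → ℳ₁)
    (q : 𝒮₁ × 𝒮₂ → ℝ)
    (hiid : ∀ s : Fin n → 𝒮₁ × 𝒮₂,
      pr μ (fun ω => fun i => (S1 i ω, S2 i ω)) s = ∏ i, q (s i))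
    (hindep : ∀ (m : ℳ₁) (s : Fin n → 𝒮₁ × 𝒮₂),
      pr μ (fun ω => (M1 ω, fun i => (S1 i ω, S2 i ω))) (m, s)
        = pr μ M1 m * pr μ (fun ω => fun i => (S1 i ω, S2 i ω)) s)
    (f12 : ℳ₁ → (Fin n → 𝒮₁) → ℳ₁₂)
    (M12 : Ω → ℳ₁₂) (hM12 : ∀ ω, M12 ω = f12 (M1 ω) (fun i => S1 i ω)) :
    cmi μ M12 (fun ω => fun i => S1 i ω) (fun ω => fun i => S2 i ω)
      = ∑ i : Fin n, cmi μ (S1 i)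
          (fun ω => (M12 ω, (fun j : {j : Fin n // j < i} => S1 j.1 ω),
            (fun j : {j : Fin n // i < j} => S2 j.1 ω)))
          (S2 i) := by
  rw [cmi_pi_eq_sum]
  refine sum_congr rfl fun k _ => ?_
  rw [cmi_comm, cmi_eq_condEnt_sub, cmi_eq_condEnt_sub, condEnt_coord_of_iid hμ.1 hiid,
    condEnt_coord_of_encoder hμ.1 hiid hindep hM12]

/-- Converse step for Theorem 2, eq. (40): with `(S₁ᵢ,S₂ᵢ)` i.i.d., `M₁` independent of
`(S₁ⁿ,S₂ⁿ)` and `M₁₂ = f₁₂(M₁,S₁ⁿ)`, one has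
`I(M₁₂;S₁ⁿ|S₂ⁿ) = Σᵢ I(S₁ᵢ;Uᵢ|S₂ᵢ)` where `Uᵢ = (M₁₂, S₁ⁱ⁻¹, S₂ᵢ₊₁ⁿ)`. -/
theorem cmi_state_decomposition_two_way
    {Ω : Type} [Fintype Ω] (μ : Ω → ℝ) (hμ : IsPMF μ)
    {n : ℕ} {𝒮₁ 𝒮₂ ℳ₁ ℳ₁₂ : Type}
    [Fintype 𝒮₁] [Fintype 𝒮₂] [Fintype ℳ₁] [Fintype ℳ₁₂]
    (S1 : Fin n → Ω → 𝒮₁) (S2 : Fin n → Ω → 𝒮₂) (M1 : Ω → ℳ₁)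
    (q : 𝒮₁ × 𝒮₂ → ℝ) (hq : IsPMF q)
    (hiid : ∀ s : Fin n → 𝒮₁ × 𝒮₂,
      pr μ (fun ω => fun i => (S1 i ω, S2 i ω)) s = ∏ i, q (s i))
    (hindep : ∀ (m : ℳ₁) (s : Fin n → 𝒮₁ × 𝒮₂),
      pr μ (fun ω => (M1 ω, fun i => (S1 i ω, S2 i ω))) (m, s)
        = pr μ M1 m * pr μ (fun ω => fun i => (S1 i ω, S2 i ω)) s)
    (f12 : ℳ₁ → (Fin n → 𝒮₁) → ℳ₁₂)
    (M12 : Ω → ℳ₁₂) (hM12 : ∀ ω, M12 ω = f12 (M1 ω) (fun i => S1 i ω)) :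
    cmi μ M12 (fun ω => fun i => S1 i ω) (fun ω => fun i => S2 i ω)
      = ∑ i : Fin n, cmi μ (S1 i)
          (fun ω => (M12 ω, (fun j : {j : Fin n // j < i} => S1 j.1 ω),
            (fun j : {j : Fin n // i < j} => S2 j.1 ω)))
          (S2 i) :=
  cmi_state_decomposition_two_way_general μ hμ S1 S2 M1 q hiid hindep f12 M12 hM12

end Paper
end
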